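/- arXiv:2411.19920 — 5 statements merged into one kernel-verified Lean document; each statement's English description precedes it below -/
import Mathlib

section
/- Let k be a field, N ≥ 1, d ∈ ℕ^{N+1}, and let (r_{ij})_{0 ≤ i ≤ j ≤ N} be a family of nonnegative integers with r_{ii} = d_i for all i. There exists a tuple (A_1, …, A_N), with A_i a d_i × d_{i−1} matrix over k, such that rank(A_j A_{j−1} ⋯ A_{i+1}) = r_{ij} for all 0 ≤ i < j ≤ N, if and only if for all 0 ≤ i ≤ j ≤ N one has r_{ij} − r_{i,j+1} − r_{i−1,j} + r_{i−1,j+1} ≥ 0 (with the convention r_{ij} = 0 when i < 0 or j > N). -/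
/-- The product `A_j ⋯ A_{i+2} A_{i+1}` (a segment of length `n` starting at vertex `i`)
of a tuple of composable matrices. -/
def matProdSeg (k : Type) [Field k] (d : ℕ → ℕ)
    (A : ∀ i : ℕ, Matrix (Fin (d (i + 1))) (Fin (d i)) k) (i : ℕ) :
    ∀ n : ℕ, Matrix (Fin (d (i + n))) (Fin (d i)) k
  | 0 => (1 : Matrix (Fin (d i)) (Fin (d i)) k)
  | n + 1 => A (i + n) * matProdSeg k d A i n

/-- The extension of a rank pattern `r` to all integer indices, by `0`
outside the triangle `0 ≤ i ≤ j ≤ N`. -/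
def rkExt (N : ℕ) (r : ℕ → ℕ → ℕ) : ℤ → ℤ → ℤ := fun i j =>
  if 0 ≤ i ∧ i ≤ j ∧ j ≤ (N : ℤ) then (r i.toNat j.toNat : ℤ) else 0

open Matrix Module

/-!
Necessity is the Frobenius rank inequality
`rank (A * B) + rank (B * C) ≤ rank B + rank (A * B * C)` for `A = A_{j+1}`, `B = A_j ⋯ A_{i+1}`,
`C = A_i`; on the boundary (`i = 0` or `j = N`) it degenerates to `rank (A * B) ≤ rank B`.

For sufficiency, extend `r` by zero. Admissibility makes `r_{ij}` antitone in `j`, and makes the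
number `r_{ij} - r_{i,j+1}` of basis vectors at vertex `i` that die at vertex `j` nondecreasing in
`i`. Order the standard basis at each vertex by decreasing death time, so that `e_s` at vertex `i`
survives to vertex `j` iff `s < r_{ij}`, and let `A_{i+1}` be the partial permutation matrix sending
each basis vector that survives past `i` to the one at vertex `i + 1` with the same death time and
the same position within its block. Products of these matrices are again partial permutation
matrices, and the rank of a partial permutation matrix is the size of its domain, here `r_{ij}`.
-/

theorem Submodule.finrank_map_add_finrank_inf_ker {K V W : Type*} [DivisionRing K]
    [AddCommGroup V] [Module K V] [AddCommGroup W] [Module K W] [FiniteDimensional K V]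
    (f : V →ₗ[K] W) (p : Submodule K V) :
    finrank K (p.map f) + finrank K ↥(p ⊓ LinearMap.ker f) = finrank K p := by
  have := (f.domRestrict p).finrank_range_add_finrank_ker
  rwa [LinearMap.range_domRestrict, LinearMap.ker_domRestrict, ← Submodule.finrank_map_subtype_eq,
    Submodule.map_comap_subtype] at this

theorem Matrix.rank_mul_add_rank_mul_le {l m n o K : Type*} [Fintype m] [Fintype n] [Fintype o]
    [Field K] (A : Matrix l m K) (B : Matrix m n K) (C : Matrix n o K) :
    (A * B).rank + (B * C).rank ≤ B.rank + (A * B * C).rank := by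
  have hPQ : LinearMap.range (B * C).mulVecLin ≤ LinearMap.range B.mulVecLin := by
    rw [mulVecLin_mul, LinearMap.range_comp]
    exact LinearMap.map_le_range
  have hAB : (A * B).rank = finrank K ((LinearMap.range B.mulVecLin).map A.mulVecLin) := by
    rw [rank, mulVecLin_mul, LinearMap.range_comp]
  have hABC : (A * B * C).rank =
      finrank K ((LinearMap.range (B * C).mulVecLin).map A.mulVecLin) := by
    rw [rank, Matrix.mul_assoc, mulVecLin_mul, LinearMap.range_comp]
  have hQ := (LinearMap.range B.mulVecLin).finrank_map_add_finrank_inf_ker A.mulVecLin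
  have hP := (LinearMap.range (B * C).mulVecLin).finrank_map_add_finrank_inf_ker A.mulVecLin
  -- `A` kills at least as much of `range B` as of its subspace `range (B * C)`.
  have hker := Submodule.finrank_mono (inf_le_inf_right (LinearMap.ker A.mulVecLin) hPQ)
  rw [hAB, hABC, rank, rank]
  omega

theorem PEquiv.trans_symm_trans {α β : Type*} (f : α ≃. β) : (f.trans f.symm).trans f = f := by
  refine PEquiv.ext fun a => ?_
  change ((f a).bind f.symm).bind f = f a
  cases h : f a with
  | none => rfl
  | some b => simp [(f.eq_some_iff).2 h, h]

theorem PEquiv.rank_toMatrix {m n K : Type*} [Fintype m] [Fintype n] [DecidableEq m]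
    [DecidableEq n] [Field K] (f : m ≃. n) :
    (f.toMatrix : Matrix m n K).rank = Fintype.card {a // (f a).isSome} := by
  classical
  -- `f.toMatrix * f.symm.toMatrix` projects onto the domain of `f`, and `f.toMatrix` factors
  -- through it.
  have hdiag : (f.trans f.symm).toMatrix =
      diagonal (fun a => if (f a).isSome then (1 : K) else 0) := by
    ext a b
    by_cases hab : a = b
    · subst hab; simp [self_trans_symm, toMatrix_apply]
    · simp [self_trans_symm, toMatrix_apply, hab, Ne.symm hab]
  have hcard : (diagonal (fun a => if (f a).isSome then (1 : K) else 0)).rank =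
      Fintype.card {a // (f a).isSome} := by
    rw [rank_diagonal]
    exact Fintype.card_congr (Equiv.subtypeEquivRight fun a => by simp [Option.ne_none_iff_isSome])
  apply le_antisymm
  · calc (f.toMatrix : Matrix m n K).rank
        = ((f.trans f.symm).toMatrix * f.toMatrix : Matrix m n K).rank := by
          rw [← toMatrix_trans, trans_symm_trans]
      _ ≤ _ := rank_mul_le_left _ _
      _ = _ := by rw [hdiag, hcard]
  · calc Fintype.card {a // (f a).isSome}
        = (f.toMatrix * f.symm.toMatrix : Matrix m m K).rank := by
          rw [← toMatrix_trans, hdiag, hcard]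
      _ ≤ _ := rank_mul_le_left _ _

section matProdSeg

variable {k : Type} [Field k] {d : ℕ → ℕ} (A : ∀ i : ℕ, Matrix (Fin (d (i + 1))) (Fin (d i)) k)

theorem mul_submatrix_cast_eq {a b : ℕ} (h : a = b) {n : Type*} (X : Matrix (Fin (d b)) n k) :
    A a * X.submatrix (Fin.cast (congrArg d h)) id =
      (A b * X).submatrix (Fin.cast (congrArg (fun t => d (t + 1)) h)) id := by
  subst h
  rfl

theorem matProdSeg_succ_eq_submatrix (i n : ℕ) :
    matProdSeg k d A i (n + 1) =
      (matProdSeg k d A (i + 1) n * A i).submatrix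
        (Fin.cast (congrArg d (Nat.succ_add i n).symm)) id := by
  induction n with
  | zero => simp [matProdSeg]
  | succ n ih =>
    change A (i + (n + 1)) * matProdSeg k d A i (n + 1) = _
    rw [ih, mul_submatrix_cast_eq A (show i + (n + 1) = i + 1 + n by omega), ← Matrix.mul_assoc]
    rfl

theorem rank_matProdSeg_succ (i n : ℕ) :
    (matProdSeg k d A i (n + 1)).rank = (matProdSeg k d A (i + 1) n * A i).rank := by
  rw [matProdSeg_succ_eq_submatrix]
  exact rank_submatrix _ (finCongr (congrArg d (Nat.succ_add i n).symm)) (Equiv.refl _)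

theorem rank_matProdSeg_succ_le_self (i n : ℕ) :
    (matProdSeg k d A i (n + 1)).rank ≤ (matProdSeg k d A i n).rank :=
  rank_mul_le_right _ _

theorem rank_matProdSeg_succ_le_succ (i n : ℕ) :
    (matProdSeg k d A i (n + 1)).rank ≤ (matProdSeg k d A (i + 1) n).rank := by
  rw [rank_matProdSeg_succ]
  exact rank_mul_le_left _ _

theorem rank_matProdSeg_frobenius (i n : ℕ) :
    (matProdSeg k d A (i + 1) (n + 1)).rank + (matProdSeg k d A i (n + 1)).rank ≤
      (matProdSeg k d A (i + 1) n).rank + (matProdSeg k d A i (n + 2)).rank := by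
  rw [rank_matProdSeg_succ A i n, rank_matProdSeg_succ A i (n + 1)]
  exact rank_mul_add_rank_mul_le (A (i + 1 + n)) (matProdSeg k d A (i + 1) n) (A i)

noncomputable def rankPattern (i j : ℕ) : ℕ := (matProdSeg k d A i (j - i)).rank

theorem rankPattern_of_add_eq {i n j : ℕ} (h : i + n = j) :
    rankPattern A i j = (matProdSeg k d A i n).rank := by
  subst h
  rw [rankPattern, Nat.add_sub_cancel_left]

theorem rankPattern_self (i : ℕ) : rankPattern A i i = d i := by
  rw [rankPattern_of_add_eq A (Nat.add_zero i)]
  exact (rank_one).trans (Fintype.card_fin _)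

end matProdSeg

def rkExtNat (N : ℕ) (r : ℕ → ℕ → ℕ) (i j : ℕ) : ℕ := if i ≤ j ∧ j ≤ N then r i j else 0

def IsAdmissible (N : ℕ) (r : ℕ → ℕ → ℕ) : Prop :=
  ∀ i j : ℤ, 0 ≤ i → i ≤ j → j ≤ (N : ℤ) →
    0 ≤ rkExt N r i j - rkExt N r i (j + 1) - rkExt N r (i - 1) j + rkExt N r (i - 1) (j + 1)

/-- The admissibility inequalities for a pattern on `ℕ × ℕ`; `zero_succ_le` is the row `i = 0`,
whose terms `ρ (-1) _` vanish. -/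
structure SecondDiffNonneg (ρ : ℕ → ℕ → ℕ) : Prop where
  zero_succ_le : ∀ j, ρ 0 (j + 1) ≤ ρ 0 j
  add_le_add : ∀ i j, i < j → ρ i j + ρ (i + 1) (j + 1) ≤ ρ (i + 1) j + ρ i (j + 1)

namespace SecondDiffNonneg

variable {ρ : ℕ → ℕ → ℕ} (hρ : SecondDiffNonneg ρ)
include hρ

theorem succ_le {i j : ℕ} (hij : i ≤ j) : ρ i (j + 1) ≤ ρ i j := by
  induction i generalizing j with
  | zero => exact hρ.zero_succ_le j
  | succ i ih =>
    have := hρ.add_le_add i j hij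
    have := ih (j := j) (by omega)
    omega

theorem antitone {i j j' : ℕ} (hij : i ≤ j) (hjj' : j ≤ j') : ρ i j' ≤ ρ i j := by
  induction j', hjj' using Nat.le_induction with
  | base => rfl
  | succ j' hj ih => exact (hρ.succ_le (hij.trans hj)).trans ih

theorem sub_succ_le_sub_succ {v u b : ℕ} (hvu : v ≤ u) (hub : u ≤ b) :
    ρ v b - ρ v (b + 1) ≤ ρ u b - ρ u (b + 1) := by
  induction u, hvu using Nat.le_induction with
  | base => rfl
  | succ u hu ih =>
    have := hρ.add_le_add u b (by omega)
    have := hρ.succ_le (i := u) (j := b) (by omega)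
    have := ih (by omega)
    omega

end SecondDiffNonneg

theorem rkExt_natCast (N : ℕ) (r : ℕ → ℕ → ℕ) (i j : ℕ) :
    rkExt N r i j = rkExtNat N r i j := by
  simp only [rkExt, rkExtNat, Int.toNat_natCast]
  split_ifs <;> omega

theorem rkExt_neg_one (N : ℕ) (r : ℕ → ℕ → ℕ) (j : ℤ) : rkExt N r (-1) j = 0 := by
  simp [rkExt]

theorem IsAdmissible.secondDiffNonneg {N : ℕ} {r : ℕ → ℕ → ℕ} (H : IsAdmissible N r) :
    SecondDiffNonneg (rkExtNat N r) where
  zero_succ_le j := by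
    rcases le_or_gt j N with hj | hj
    · have := H 0 j le_rfl (by positivity) (by exact_mod_cast hj)
      have h1 := rkExt_natCast N r 0 j
      have h2 := rkExt_natCast N r 0 (j + 1)
      push_cast at h1 h2
      rw [zero_sub, rkExt_neg_one, rkExt_neg_one, h1, h2] at this
      omega
    · simp only [rkExtNat]
      split_ifs <;> omega
  add_le_add i j hij := by
    rcases le_or_gt j N with hj | hj
    · have := H (i + 1) j (by positivity) (by exact_mod_cast hij) (by exact_mod_cast hj)
      have h1 := rkExt_natCast N r (i + 1) j
      have h2 := rkExt_natCast N r (i + 1) (j + 1)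
      have h3 := rkExt_natCast N r i j
      have h4 := rkExt_natCast N r i (j + 1)
      push_cast at h1 h2 h3 h4
      rw [add_sub_cancel_right, h1, h2, h3, h4] at this
      omega
    · simp only [rkExtNat]
      split_ifs <;> omega

theorem SecondDiffNonneg.isAdmissible {N : ℕ} {r : ℕ → ℕ → ℕ}
    (h : SecondDiffNonneg (rkExtNat N r)) : IsAdmissible N r := by
  intro i j hi hij hj
  lift i to ℕ using hi
  lift j to ℕ using (by omega)
  have h1 := rkExt_natCast N r i j
  have h2 := rkExt_natCast N r i (j + 1)
  push_cast at h1 h2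
  rw [h1, h2]
  rcases i with _ | i
  · have := h.zero_succ_le j
    rw [Nat.cast_zero, zero_sub, rkExt_neg_one, rkExt_neg_one]
    omega
  · have := h.add_le_add i j (by omega)
    have h3 := rkExt_natCast N r i j
    have h4 := rkExt_natCast N r i (j + 1)
    push_cast at h3 h4 ⊢
    rw [add_sub_cancel_right, h3, h4]
    omega

theorem rkExtNat_congr {N : ℕ} {r r' : ℕ → ℕ → ℕ} (h : ∀ i j, i ≤ j → j ≤ N → r i j = r' i j) :
    rkExtNat N r = rkExtNat N r' := by
  funext i j
  simp only [rkExtNat]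
  split_ifs with hij
  exacts [h i j hij.1 hij.2, rfl]

structure IsRankProfile (N : ℕ) (d : ℕ → ℕ) (ρ : ℕ → ℕ → ℕ) : Prop
    extends SecondDiffNonneg ρ where
  eq_zero_of_lt : ∀ v b, N < b → ρ v b = 0
  diag : ∀ v ≤ N, ρ v v = d v

theorem isRankProfile_rkExtNat {N : ℕ} {d : ℕ → ℕ} {r : ℕ → ℕ → ℕ}
    (hr : SecondDiffNonneg (rkExtNat N r)) (hdiag : ∀ i ≤ N, r i i = d i) :
    IsRankProfile N d (rkExtNat N r) where
  toSecondDiffNonneg := hr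
  eq_zero_of_lt v b hb := if_neg fun h => by omega
  diag v hv := by rw [rkExtNat, if_pos ⟨le_rfl, hv⟩, hdiag v hv]

theorem secondDiffNonneg_rkExtNat_rankPattern {k : Type} [Field k] {d : ℕ → ℕ}
    (A : ∀ i : ℕ, Matrix (Fin (d (i + 1))) (Fin (d i)) k) (N : ℕ) :
    SecondDiffNonneg (rkExtNat N (rankPattern A)) where
  zero_succ_le j := by
    have e1 : rankPattern A 0 j = (matProdSeg k d A 0 j).rank := rankPattern_of_add_eq A (by omega)
    have e2 : rankPattern A 0 (j + 1) = (matProdSeg k d A 0 (j + 1)).rank :=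
      rankPattern_of_add_eq A (by omega)
    have h := rank_matProdSeg_succ_le_self A 0 j
    simp only [rkExtNat]
    split_ifs <;> omega
  add_le_add i j hij := by
    obtain ⟨n, rfl⟩ : ∃ n, j = i + 1 + n := ⟨j - (i + 1), by omega⟩
    have e1 : rankPattern A i (i + 1 + n) = (matProdSeg k d A i (n + 1)).rank :=
      rankPattern_of_add_eq A (by omega)
    have e2 : rankPattern A i (i + 1 + n + 1) = (matProdSeg k d A i (n + 2)).rank :=
      rankPattern_of_add_eq A (by omega)
    have e3 : rankPattern A (i + 1) (i + 1 + n) = (matProdSeg k d A (i + 1) n).rank :=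
      rankPattern_of_add_eq A rfl
    have e4 : rankPattern A (i + 1) (i + 1 + n + 1) = (matProdSeg k d A (i + 1) (n + 1)).rank :=
      rankPattern_of_add_eq A (by omega)
    have h1 := rank_matProdSeg_succ_le_succ A i n
    have h2 := rank_matProdSeg_frobenius A i n
    simp only [rkExtNat]
    split_ifs <;> omega

namespace RankProfile

variable {N : ℕ} {d : ℕ → ℕ} {ρ : ℕ → ℕ → ℕ}

/-! At vertex `v`, the basis vector `e_s` survives up to vertex `death N ρ v s`, so the vectors
dying at `b` fill the block `[ρ v (b + 1), ρ v b)`, and `offset N ρ v s` is the position of `s` in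
its block. `Alive N ρ v b o` says that the block of `b` at vertex `v` has a slot `o`. -/

variable (N ρ) in
def death (v s : ℕ) : ℕ := Nat.findGreatest (fun b => s < ρ v b) N

variable (N ρ) in
def offset (v s : ℕ) : ℕ := s - ρ v (death N ρ v s + 1)

variable (N ρ) in
def Alive (v b o : ℕ) : Prop := v ≤ b ∧ b ≤ N ∧ o < ρ v b - ρ v (b + 1)

theorem death_eq_of_alive (hρ : SecondDiffNonneg ρ) {v b o : ℕ} (h : Alive N ρ v b o) :
    death N ρ v (ρ v (b + 1) + o) = b := by
  obtain ⟨hvb, hbN, ho⟩ := h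
  refine Nat.findGreatest_eq_iff.2 ⟨hbN, fun _ => by omega, fun k hbk _ => ?_⟩
  have := hρ.antitone (i := v) (j := b + 1) (j' := k) (by omega) hbk
  omega

theorem offset_eq_of_alive (hρ : SecondDiffNonneg ρ) {v b o : ℕ} (h : Alive N ρ v b o) :
    offset N ρ v (ρ v (b + 1) + o) = o := by
  rw [offset, death_eq_of_alive hρ h]
  omega

theorem rho_death_succ_le (hZ : ∀ v b, N < b → ρ v b = 0) (v s : ℕ) :
    ρ v (death N ρ v s + 1) ≤ s := by
  by_cases h : death N ρ v s < N
  · exact not_lt.1 (Nat.findGreatest_is_greatest (P := fun b => s < ρ v b) (Nat.lt_succ_self _) h)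
  · rw [hZ v _ (by omega)]
    exact Nat.zero_le s

theorem alive_death (hZ : ∀ v b, N < b → ρ v b = 0) {v s : ℕ} (hv : v ≤ N) (hs : s < ρ v v) :
    Alive N ρ v (death N ρ v s) (offset N ρ v s) := by
  have h1 : v ≤ death N ρ v s := Nat.le_findGreatest hv hs
  have h2 : s < ρ v (death N ρ v s) := Nat.findGreatest_spec (P := fun b => s < ρ v b) hv hs
  have h3 := rho_death_succ_le hZ v s
  exact ⟨h1, Nat.findGreatest_le N, by rw [offset]; omega⟩

theorem le_death_iff (hρ : SecondDiffNonneg ρ) {v w s : ℕ} (hvw : v ≤ w) (hw : w ≤ N)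
    (hs : s < ρ v v) : w ≤ death N ρ v s ↔ s < ρ v w := by
  refine ⟨fun h => ?_, fun h => Nat.le_findGreatest hw h⟩
  have := Nat.findGreatest_spec (P := fun b => s < ρ v b) (hvw.trans hw) hs
  exact this.trans_le (hρ.antitone hvw h)

theorem Alive.of_le_of_le (hρ : SecondDiffNonneg ρ) {v u w b o : ℕ} (hv : Alive N ρ v b o)
    (hw : Alive N ρ w b o) (hvu : v ≤ u) (huw : u ≤ w) : Alive N ρ u b o :=
  ⟨huw.trans hw.1, hw.2.1, hv.2.2.trans_le (hρ.sub_succ_le_sub_succ hvu (huw.trans hw.1))⟩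

theorem Alive.rho_add_lt (hρ : IsRankProfile N d ρ) {w b o : ℕ} (h : Alive N ρ w b o) :
    ρ w (b + 1) + o < d w := by
  have := hρ.antitone le_rfl h.1
  have := hρ.diag w (h.1.trans h.2.1)
  have := h.2.2
  omega

theorem rho_death_succ_add_offset (hZ : ∀ v b, N < b → ρ v b = 0) (v s : ℕ) :
    ρ v (death N ρ v s + 1) + offset N ρ v s = s := by
  have := rho_death_succ_le hZ v s
  rw [offset]
  omega

instance (v b o : ℕ) : Decidable (Alive N ρ v b o) :=
  inferInstanceAs (Decidable (_ ∧ _ ∧ _))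

def transferFun (hρ : IsRankProfile N d ρ) (v w : ℕ) (s : Fin (d v)) : Option (Fin (d w)) :=
  if h : Alive N ρ v (death N ρ v s) (offset N ρ v s) ∧
      Alive N ρ w (death N ρ v s) (offset N ρ v s) then
    some ⟨ρ w (death N ρ v s + 1) + offset N ρ v s, h.2.rho_add_lt hρ⟩
  else none

theorem transferFun_eq_some_iff (hρ : IsRankProfile N d ρ) {v w : ℕ} (s : Fin (d v))
    (t : Fin (d w)) :
    transferFun hρ v w s = some t ↔ ∃ b o, Alive N ρ v b o ∧ Alive N ρ w b o ∧
      (s : ℕ) = ρ v (b + 1) + o ∧ (t : ℕ) = ρ w (b + 1) + o := by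
  constructor
  · intro h
    unfold transferFun at h
    split_ifs at h with hs
    refine ⟨_, _, hs.1, hs.2, (rho_death_succ_add_offset hρ.eq_zero_of_lt v s).symm, ?_⟩
    rw [← Option.some_inj.1 h]
  · rintro ⟨b, o, hv, hw, hs, ht⟩
    have hb : death N ρ v s = b := by rw [hs]; exact death_eq_of_alive hρ.toSecondDiffNonneg hv
    have ho : offset N ρ v s = o := by rw [hs]; exact offset_eq_of_alive hρ.toSecondDiffNonneg hv
    rw [transferFun, dif_pos (by rw [hb, ho]; exact ⟨hv, hw⟩), Option.some_inj]
    ext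
    simp only [hb, ho, ht]

/-- Matches the basis vectors at vertices `v` and `w` with the same death time and offset. -/
def transfer (hρ : IsRankProfile N d ρ) (v w : ℕ) : Fin (d v) ≃. Fin (d w) where
  toFun := transferFun hρ v w
  invFun := transferFun hρ w v
  inv s t := by
    simp only [transferFun_eq_some_iff]
    exact exists₂_congr fun b o => by tauto

theorem transfer_eq_some_iff (hρ : IsRankProfile N d ρ) {v w : ℕ} (s : Fin (d v))
    (t : Fin (d w)) :
    transfer hρ v w s = some t ↔ ∃ b o, Alive N ρ v b o ∧ Alive N ρ w b o ∧
      (s : ℕ) = ρ v (b + 1) + o ∧ (t : ℕ) = ρ w (b + 1) + o :=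
  transferFun_eq_some_iff hρ s t

theorem transfer_self (hρ : IsRankProfile N d ρ) {v : ℕ} (hv : v ≤ N) :
    transfer hρ v v = PEquiv.refl _ := by
  refine PEquiv.ext fun s => Option.ext fun t => ?_
  change transfer hρ v v s = some t ↔ some s = some t
  rw [transfer_eq_some_iff, Option.some_inj]
  constructor
  · rintro ⟨b, o, -, -, hs, ht⟩
    exact Fin.ext (hs.trans ht.symm)
  · rintro rfl
    have h := alive_death hρ.eq_zero_of_lt hv (by rw [hρ.diag v hv]; exact s.isLt)
    have hs := (rho_death_succ_add_offset hρ.eq_zero_of_lt v s).symm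
    exact ⟨_, _, h, h, hs, hs⟩

theorem transfer_trans (hρ : IsRankProfile N d ρ) {v u w : ℕ} (hvu : v ≤ u) (huw : u ≤ w) :
    (transfer hρ w u).trans (transfer hρ u v) = transfer hρ w v := by
  refine PEquiv.ext fun t => Option.ext fun s => ?_
  simp only [PEquiv.trans_eq_some, transfer_eq_some_iff]
  constructor
  · rintro ⟨x, ⟨b, o, hw, hu, ht, hx⟩, ⟨b', o', hu', hv, hx', hs⟩⟩
    obtain rfl : b = b' := by
      rw [← death_eq_of_alive hρ.toSecondDiffNonneg hu,
        ← death_eq_of_alive hρ.toSecondDiffNonneg hu', ← hx, hx']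
    obtain rfl : o = o' := by omega
    exact ⟨b, o, hw, hv, ht, hs⟩
  · rintro ⟨b, o, hw, hv, ht, hs⟩
    have hu := hv.of_le_of_le hρ.toSecondDiffNonneg hw hvu huw
    exact ⟨⟨_, hu.rho_add_lt hρ⟩, ⟨b, o, hw, hu, ht, rfl⟩, ⟨b, o, hu, hv, rfl, hs⟩⟩

theorem isSome_transfer_iff (hρ : IsRankProfile N d ρ) {v w : ℕ} (hvw : v ≤ w) (hw : w ≤ N)
    (s : Fin (d v)) : (transfer hρ v w s).isSome ↔ (s : ℕ) < ρ v w := by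
  have hs : (s : ℕ) < ρ v v := (hρ.diag v (hvw.trans hw)).symm ▸ s.isLt
  have hv := alive_death hρ.eq_zero_of_lt (hvw.trans hw) hs
  rw [← le_death_iff hρ.toSecondDiffNonneg hvw hw hs]
  change (transferFun hρ v w s).isSome ↔ _
  unfold transferFun
  split_ifs with h
  · exact iff_of_true rfl h.2.1
  · refine iff_of_false (by simp) fun hwd => h ⟨hv, hwd, hv.2.1, ?_⟩
    exact hv.2.2.trans_le (hρ.sub_succ_le_sub_succ hvw hwd)

theorem rank_toMatrix_transfer (k : Type) [Field k] (hρ : IsRankProfile N d ρ) {v w : ℕ}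
    (hvw : v ≤ w) (hw : w ≤ N) :
    ((transfer hρ w v).toMatrix : Matrix (Fin (d w)) (Fin (d v)) k).rank = ρ v w := by
  rw [show transfer hρ w v = (transfer hρ v w).symm from rfl, PEquiv.toMatrix_symm,
    rank_transpose, PEquiv.rank_toMatrix,
    Fintype.card_congr (Equiv.subtypeEquivRight (isSome_transfer_iff hρ hvw hw))]
  refine Fintype.card_fin_lt_of_le ?_
  rw [← hρ.diag v (hvw.trans hw)]
  exact hρ.antitone le_rfl hvw

theorem matProdSeg_transfer (k : Type) [Field k] (hρ : IsRankProfile N d ρ) {i : ℕ} :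
    ∀ {n : ℕ}, i + n ≤ N → matProdSeg k d (fun v => (transfer hρ (v + 1) v).toMatrix) i n =
      (transfer hρ (i + n) i).toMatrix
  | 0, h => by
    change 1 = (transfer hρ i i).toMatrix
    rw [transfer_self hρ (v := i) h, PEquiv.toMatrix_refl]
  | n + 1, h => by
    rw [matProdSeg, matProdSeg_transfer k hρ (by omega), ← PEquiv.toMatrix_trans,
      transfer_trans hρ (by omega) (by omega)]
    rfl

end RankProfile

theorem stmt2_general (k : Type) [Field k] (N : ℕ) (d : ℕ → ℕ)
    (r : ℕ → ℕ → ℕ) (hdiag : ∀ i ≤ N, r i i = d i) :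
    (∃ A : ∀ i : ℕ, Matrix (Fin (d (i + 1))) (Fin (d i)) k,
        ∀ i j : ℕ, i < j → j ≤ N → (matProdSeg k d A i (j - i)).rank = r i j) ↔
      (∀ i j : ℤ, 0 ≤ i → i ≤ j → j ≤ (N : ℤ) →
        0 ≤ rkExt N r i j - rkExt N r i (j + 1) - rkExt N r (i - 1) j +
          rkExt N r (i - 1) (j + 1)) := by
  change _ ↔ IsAdmissible N r
  constructor
  · rintro ⟨A, hA⟩
    have hr : rkExtNat N r = rkExtNat N (rankPattern A) := rkExtNat_congr fun i j hij hjN => by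
      rcases hij.lt_or_eq with hij | rfl
      · exact (hA i j hij hjN).symm
      · rw [hdiag i hjN, rankPattern_self]
    exact SecondDiffNonneg.isAdmissible (hr ▸ secondDiffNonneg_rkExtNat_rankPattern A N)
  · intro hr
    have hρ := isRankProfile_rkExtNat hr.secondDiffNonneg hdiag
    refine ⟨fun v => (RankProfile.transfer hρ (v + 1) v).toMatrix, fun i j hij hjN => ?_⟩
    rw [RankProfile.matProdSeg_transfer k hρ (by omega),
      RankProfile.rank_toMatrix_transfer k hρ (by omega) (by omega), Nat.add_sub_cancel' hij.le]
    exact if_pos ⟨hij.le, hjN⟩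

/-- There is a tuple of composable matrices realizing the rank pattern `r`
(i.e. `rank(A_j ⋯ A_{i+1}) = r_{ij}` for all `0 ≤ i < j ≤ N`) iff all second
differences `r_{ij} − r_{i,j+1} − r_{i−1,j} + r_{i−1,j+1}` are nonnegative. -/
theorem stmt2 (k : Type) [Field k] (N : ℕ) (hN : 1 ≤ N) (d : ℕ → ℕ)
    (r : ℕ → ℕ → ℕ) (hdiag : ∀ i ≤ N, r i i = d i) :
    (∃ A : ∀ i : ℕ, Matrix (Fin (d (i + 1))) (Fin (d i)) k,
        ∀ i j : ℕ, i < j → j ≤ N → (matProdSeg k d A i (j - i)).rank = r i j) ↔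
      (∀ i j : ℤ, 0 ≤ i → i ≤ j → j ≤ (N : ℤ) →
        0 ≤ rkExt N r i j - rkExt N r i (j + 1) - rkExt N r (i - 1) j +
          rkExt N r (i - 1) (j + 1)) :=
  stmt2_general k N d r hdiag
end

section
/- Fix N ≥ 1 and d ∈ ℕ^{N+1}. In the formal power series ring ℚ[[q]] one has the identity P_d = Σ_{m ∈ M^+_d} q^{c(m)} · P_m, where the sum runs over the finite set of all Kostant partitions of d, P_d = Π_{i=0}^N P_{d_i} and P_m = Π_{0 ≤ i ≤ j ≤ N} P_{m_{ij}}. -/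
/-- `m` is a Kostant partition of the dimension vector `d` for the equioriented
type-A quiver with vertices `0, …, N`: `m` is supported on the triangle
`i ≤ j ≤ N` and `d_k = Σ_{i ≤ k ≤ j} m_{ij}` for every `k ≤ N`. -/
def IsKostant (N : ℕ) (d : ℕ → ℕ) (m : ℕ → ℕ → ℕ) : Prop :=
  (∀ i j : ℕ, ¬(i ≤ j ∧ j ≤ N) → m i j = 0) ∧
  ∀ k ≤ N, d k = ∑ i ∈ Finset.range (k + 1), ∑ j ∈ Finset.Icc k N, m i j

/-- `c(m) = Σ_{1 ≤ i ≤ u ≤ j ≤ v ≤ N} m_{i−1,j−1} · m_{u,v}`, the codimension of the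
orbit corresponding to the Kostant partition `m`. -/
def kpCodim (N : ℕ) (m : ℕ → ℕ → ℕ) : ℕ :=
  ∑ i ∈ Finset.Icc 1 N, ∑ u ∈ Finset.Icc i N, ∑ j ∈ Finset.Icc u N,
    ∑ v ∈ Finset.Icc j N, m (i - 1) (j - 1) * m u v

/-- `P_s = Π_{t=1}^s (1 − q^t)⁻¹ ∈ ℚ⟦q⟧`, the inverse `q`-Pochhammer symbol. -/
noncomputable def Pq (s : ℕ) : PowerSeries ℚ :=
  ∏ t ∈ Finset.Icc 1 s, (1 - (PowerSeries.X : PowerSeries ℚ) ^ t)⁻¹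

/-- `P_m = Π_{0 ≤ i ≤ j ≤ N} P_{m_{ij}}` for a Kostant partition `m`. -/
noncomputable def PqKP (N : ℕ) (m : ℕ → ℕ → ℕ) : PowerSeries ℚ :=
  ∏ i ∈ Finset.range (N + 1), ∏ j ∈ Finset.Icc i N, Pq (m i j)

/-!
Induction on `N`, splitting off the column `r i = m i (N + 1)` of intervals that end at the last
vertex. The rest `m'` of `m` is a Kostant partition of `k ↦ d k - (r 0 + ⋯ + r k)` on `0, …, N`,
`c(m) = c(m') + Σ_u r_u (d_{u-1} - (r_0 + ⋯ + r_{u-1}))` and `P_m = P_{m'} Π_i P_{r_i}`. After the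
induction hypothesis it remains to sum over the admissible columns `r`; peeling off their entries
one at a time, each step is the rank-one identity `P_a P_b = Σ_c q^{(a-c)(b-c)} P_{a-c} P_c P_{b-c}`
(the case `N = 1`), which follows by induction on `b` after multiplying by `1 - q^{b+1}`.
-/

open Finset PowerSeries

theorem constantCoeff_one_sub_X_pow {t : ℕ} (ht : t ≠ 0) :
    constantCoeff (1 - X ^ t : ℚ⟦X⟧) = 1 := by
  simp [zero_pow ht]

theorem one_sub_X_pow_ne_zero {t : ℕ} (ht : t ≠ 0) : (1 - X ^ t : ℚ⟦X⟧) ≠ 0 := fun h => by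
  simpa [h] using constantCoeff_one_sub_X_pow ht

theorem Pq_zero : Pq 0 = 1 := by simp [Pq]

theorem one_sub_X_pow_mul_Pq_succ (s : ℕ) : (1 - X ^ (s + 1)) * Pq (s + 1) = Pq s := by
  rw [Pq, prod_Icc_succ_top (by omega), mul_comm, mul_assoc, ← Pq,
    PowerSeries.inv_mul_cancel _ (by simp [constantCoeff_one_sub_X_pow]), mul_one]

noncomputable def rankOneSum (a b : ℕ) : ℚ⟦X⟧ :=
  ∑ c ∈ range (min a b + 1), X ^ ((a - c) * (b - c)) * (Pq (a - c) * Pq c * Pq (b - c))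

theorem rankOneSum_comm (a b : ℕ) : rankOneSum a b = rankOneSum b a := by
  rw [rankOneSum, rankOneSum, min_comm]
  refine sum_congr rfl fun c _ => ?_
  ring

theorem rankOneSum_zero_right (a : ℕ) : rankOneSum a 0 = Pq a := by
  simp [rankOneSum, Pq_zero]

theorem one_sub_X_pow_mul_rankOneSum_succ {a b : ℕ} (h : b < a) :
    (1 - X ^ (b + 1)) * rankOneSum a (b + 1) = rankOneSum a b := by
  let A (c : ℕ) : ℚ⟦X⟧ := X ^ ((a - c) * (b + 1 - c)) *
    (Pq (a - c) * Pq c * ((1 - X ^ (b + 1 - c)) * Pq (b + 1 - c)))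
  let B (c : ℕ) : ℚ⟦X⟧ := X ^ ((a - c) * (b + 1 - c) + (b + 1 - c)) *
    (Pq (a - c) * ((1 - X ^ c) * Pq c) * Pq (b + 1 - c))
  -- `1 - q^(b+1) = (1 - q^(b+1-c)) + q^(b+1-c) (1 - q^c)`
  have hsplit : ∀ c ∈ range (b + 1 + 1), (1 - X ^ (b + 1)) *
      (X ^ ((a - c) * (b + 1 - c)) * (Pq (a - c) * Pq c * Pq (b + 1 - c))) = A c + B c := by
    intro c hc
    have hX : (X : ℚ⟦X⟧) ^ (b + 1 - c) * X ^ c = X ^ (b + 1) := by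
      rw [← pow_add, Nat.sub_add_cancel (Nat.lt_succ_iff.mp (mem_range.mp hc))]
    simp only [A, B]
    linear_combination (X ^ ((a - c) * (b + 1 - c)) * Pq (a - c) * Pq c * Pq (b + 1 - c)) * hX
  have hpair : ∀ c ∈ range (b + 1), A c + B (c + 1) =
      X ^ ((a - c) * (b - c)) * (Pq (a - c) * Pq c * Pq (b - c)) := by
    intro c hc
    have hcb := mem_range.mp hc
    obtain ⟨α, hα⟩ : ∃ α, a - c = α + 1 := ⟨a - c - 1, by omega⟩
    have h1 : b + 1 - c = b - c + 1 := by omega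
    have h2 : a - (c + 1) = α := by omega
    have h3 : b + 1 - (c + 1) = b - c := by omega
    simp only [A, B, hα, h1, h2, h3, one_sub_X_pow_mul_Pq_succ]
    linear_combination (-X ^ ((α + 1) * (b - c)) * Pq c * Pq (b - c)) * one_sub_X_pow_mul_Pq_succ α
  rw [rankOneSum, rankOneSum, min_eq_right h, min_eq_right h.le, mul_sum, sum_congr rfl hsplit,
    sum_add_distrib, sum_range_succ A, sum_range_succ' B, ← sum_congr rfl hpair, sum_add_distrib]
  simp [A, B]

theorem rankOneSum_eq (a b : ℕ) : rankOneSum a b = Pq a * Pq b := by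
  wlog hba : b ≤ a generalizing a b
  · rw [rankOneSum_comm, this b a (by omega), mul_comm]
  induction b with
  | zero => rw [rankOneSum_zero_right, Pq_zero, mul_one]
  | succ b ih =>
    refine mul_left_cancel₀ (one_sub_X_pow_ne_zero b.succ_ne_zero) ?_
    rw [one_sub_X_pow_mul_rankOneSum_succ hba, ih (by omega), mul_left_comm,
      one_sub_X_pow_mul_Pq_succ]

theorem Set.finite_Iic_of_finite_support {ι : Type*} {B : ι → ℕ}
    (hB : (Function.support B).Finite) : (Set.Iic B).Finite := by
  have : Finite (Function.support B) := hB
  refine Set.Finite.of_finite_image (f := fun f (i : Function.support B) => f i)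
    ((Set.Finite.pi (t := fun i : Function.support B => Set.Iic (B i))
      fun _ => Set.finite_Iic _).subset ?_) fun f hf g hg hfg => funext fun i => ?_
  · rintro _ ⟨f, hf, rfl⟩ i -
    exact hf i
  · by_cases hi : B i = 0
    · have := hf i; have := hg i; simp only [hi] at *; omega
    · exact congrFun hfg ⟨i, hi⟩

def partialSum (r : ℕ → ℕ) (j : ℕ) : ℕ := ∑ i ∈ range (j + 1), r i

theorem partialSum_succ (r : ℕ → ℕ) (k : ℕ) : partialSum r (k + 1) = partialSum r k + r (k + 1) :=
  sum_range_succ r (k + 1)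

theorem partialSum_update_of_le (r : ℕ → ℕ) {j k : ℕ} (h : j ≤ k) (v : ℕ) :
    partialSum (Function.update r (k + 1) v) j = partialSum r j :=
  sum_congr rfl fun i hi => Function.update_of_ne (by simp at hi; omega) _ _

theorem le_partialSum (r : ℕ → ℕ) {i j : ℕ} (h : i ≤ j) : r i ≤ partialSum r j :=
  single_le_sum (fun _ _ => Nat.zero_le _) (mem_range.mpr (Nat.lt_succ_of_le h))

/-- `r` can be the column `i ↦ m i k` of a Kostant partition `m` of a dimension vector that is `a`
below `k` and `b` at `k`. -/
def IsColumn (k : ℕ) (a : ℕ → ℕ) (b : ℕ) (r : ℕ → ℕ) : Prop :=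
  (∀ i, k < i → r i = 0) ∧ partialSum r k = b ∧ ∀ j < k, partialSum r j ≤ a j

theorem finite_setOf_isColumn (k : ℕ) (a : ℕ → ℕ) (b : ℕ) : {r | IsColumn k a b r}.Finite := by
  refine (Set.finite_Iic_of_finite_support (B := fun i => if i ≤ k then b else 0)
    ((Set.finite_Iic k).subset fun i hi => by_contra fun h => hi (if_neg h))).subset
    fun r ⟨hr, hrb, _⟩ i => ?_
  by_cases hi : i ≤ k
  · simpa [hi, ← hrb] using le_partialSum r hi
  · simp [hi, hr i (by omega)]

noncomputable def columnFinset (k : ℕ) (a : ℕ → ℕ) (b : ℕ) : Finset (ℕ → ℕ) :=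
  (finite_setOf_isColumn k a b).toFinset

theorem mem_columnFinset {k : ℕ} {a : ℕ → ℕ} {b : ℕ} {r : ℕ → ℕ} :
    r ∈ columnFinset k a b ↔ IsColumn k a b r :=
  Set.Finite.mem_toFinset _

theorem columnFinset_zero (a : ℕ → ℕ) (b : ℕ) : columnFinset 0 a b = {Pi.single 0 b} := by
  ext r
  simp only [mem_columnFinset, IsColumn, partialSum, zero_add, sum_range_one, mem_singleton,
    not_lt_zero, false_imp_iff, implies_true, and_true]
  constructor
  · rintro ⟨hr, rfl⟩
    funext i
    rcases Nat.eq_zero_or_pos i with rfl | hi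
    · simp
    · simp [hr i hi, hi.ne']
  · rintro rfl
    exact ⟨fun i hi => by simp [hi.ne'], by simp⟩

theorem IsColumn.update {k : ℕ} {a : ℕ → ℕ} {b c : ℕ} {r : ℕ → ℕ} (hr : IsColumn k a c r)
    (hca : c ≤ a k) (hcb : c ≤ b) : IsColumn (k + 1) a b (Function.update r (k + 1) (b - c)) := by
  obtain ⟨hr0, hrc, hra⟩ := hr
  refine ⟨fun i hi => ?_, ?_, fun j hj => ?_⟩
  · rw [Function.update_of_ne (by omega), hr0 i (by omega)]
  · rw [partialSum_succ, partialSum_update_of_le r le_rfl, Function.update_self, hrc]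
    omega
  · rw [partialSum_update_of_le r (by omega)]
    rcases Nat.lt_succ_iff_lt_or_eq.mp hj with hj | rfl
    · exact hra j hj
    · omega

theorem IsColumn.partialSum_le {k : ℕ} {a : ℕ → ℕ} {b : ℕ} {r : ℕ → ℕ}
    (hr : IsColumn (k + 1) a b r) : partialSum r k ≤ a k ∧ partialSum r k ≤ b :=
  ⟨hr.2.2 k k.lt_succ_self, hr.2.1 ▸ partialSum_succ r k ▸ Nat.le_add_right _ _⟩

theorem IsColumn.update_zero {k : ℕ} {a : ℕ → ℕ} {b : ℕ} {r : ℕ → ℕ}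
    (hr : IsColumn (k + 1) a b r) :
    IsColumn k a (partialSum r k) (Function.update r (k + 1) 0) := by
  obtain ⟨hr0, -, hra⟩ := hr
  refine ⟨fun i hi => ?_, partialSum_update_of_le r le_rfl _,
    fun j hj => (partialSum_update_of_le r hj.le _).trans_le (hra j (by omega))⟩
  rcases eq_or_ne i (k + 1) with rfl | hik
  · exact Function.update_self ..
  · rw [Function.update_of_ne hik, hr0 i (by omega)]

theorem sum_columnFinset_succ {M : Type*} [AddCommMonoid M] (k : ℕ) (a : ℕ → ℕ) (b : ℕ)
    (f : (ℕ → ℕ) → M) :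
    ∑ r ∈ columnFinset (k + 1) a b, f r = ∑ c ∈ range (min (a k) b + 1),
      ∑ r ∈ columnFinset k a c, f (Function.update r (k + 1) (b - c)) := by
  rw [sum_sigma']
  refine (sum_nbij' (fun p : (_ : ℕ) × (ℕ → ℕ) => Function.update p.2 (k + 1) (b - p.1))
    (fun r => ⟨partialSum r k, Function.update r (k + 1) 0⟩) ?_ ?_ ?_ ?_ fun _ _ => rfl).symm
  · rintro ⟨c, r⟩ hp
    simp only [mem_sigma, mem_range, mem_columnFinset] at hp
    exact mem_columnFinset.mpr (hp.2.update (by omega) (by omega))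
  · intro r hr
    have hr := mem_columnFinset.mp hr
    have := hr.partialSum_le
    simp only [mem_sigma, mem_range, mem_columnFinset]
    exact ⟨by omega, hr.update_zero⟩
  · rintro ⟨c, r⟩ hp
    simp only [mem_sigma, mem_columnFinset] at hp
    obtain ⟨-, hr0, hrc, -⟩ := hp
    rw [partialSum_update_of_le r le_rfl, hrc, Function.update_idem, ← hr0 (k + 1) (by omega),
      Function.update_eq_self]
  · intro r hr
    obtain ⟨-, hrb, -⟩ := mem_columnFinset.mp hr
    have hlast : b - partialSum r k = r (k + 1) := by rw [← hrb, partialSum_succ]; omega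
    rw [Function.update_idem, hlast, Function.update_eq_self]

/-- The part of `kpCodim` from the pairs whose second interval ends at `k`, written through the
column `r` and the dimension vector `a` (see `kpCodim_setColumn`). -/
def columnExponent (k : ℕ) (a : ℕ → ℕ) (r : ℕ → ℕ) : ℕ :=
  ∑ u ∈ Icc 1 k, r u * (a (u - 1) - partialSum r (u - 1))

theorem columnExponent_update {k : ℕ} (a r : ℕ → ℕ) (v : ℕ) :
    columnExponent (k + 1) a (Function.update r (k + 1) v) =
      columnExponent k a r + v * (a k - partialSum r k) := by
  rw [columnExponent, sum_Icc_succ_top (by omega), Function.update_self, Nat.add_sub_cancel,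
    partialSum_update_of_le r le_rfl]
  congr 1
  refine sum_congr rfl fun u hu => ?_
  rw [mem_Icc] at hu
  rw [Function.update_of_ne (by omega), partialSum_update_of_le r (by omega)]

theorem sum_columnFinset (k : ℕ) (a : ℕ → ℕ) (b : ℕ) :
    ∑ r ∈ columnFinset k a b, X ^ columnExponent k a r *
      ((∏ i ∈ range (k + 1), Pq (r i)) * ∏ j ∈ range k, Pq (a j - partialSum r j)) =
      Pq b * ∏ j ∈ range k, Pq (a j) := by
  induction k generalizing b with
  | zero => simp [columnFinset_zero, columnExponent]
  | succ k ih =>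
    have hterm : ∀ c ∈ range (min (a k) b + 1), ∀ r ∈ columnFinset k a c,
        X ^ columnExponent (k + 1) a (Function.update r (k + 1) (b - c)) *
          ((∏ i ∈ range (k + 1 + 1), Pq (Function.update r (k + 1) (b - c) i)) *
            ∏ j ∈ range (k + 1), Pq (a j - partialSum (Function.update r (k + 1) (b - c)) j)) =
        X ^ ((a k - c) * (b - c)) * (Pq (a k - c) * Pq (b - c)) * (X ^ columnExponent k a r *
          ((∏ i ∈ range (k + 1), Pq (r i)) * ∏ j ∈ range k, Pq (a j - partialSum r j))) := by
      intro c _ r hr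
      have hrc := (mem_columnFinset.mp hr).2.1
      have hcol : ∏ i ∈ range (k + 1 + 1), Pq (Function.update r (k + 1) (b - c) i) =
          (∏ i ∈ range (k + 1), Pq (r i)) * Pq (b - c) := by
        rw [prod_range_succ, Function.update_self,
          prod_congr rfl fun i hi => by rw [Function.update_of_ne (by simp at hi; omega)]]
      have hrest :
          ∏ j ∈ range (k + 1), Pq (a j - partialSum (Function.update r (k + 1) (b - c)) j) =
          (∏ j ∈ range k, Pq (a j - partialSum r j)) * Pq (a k - c) := by
        rw [prod_range_succ, partialSum_update_of_le r le_rfl, hrc,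
          prod_congr rfl fun j hj => by rw [partialSum_update_of_le r (by simp at hj; omega)]]
      rw [columnExponent_update, hcol, hrest, hrc, pow_add]
      ring
    calc _ = ∑ c ∈ range (min (a k) b + 1),
          X ^ ((a k - c) * (b - c)) * (Pq (a k - c) * Pq c * Pq (b - c)) *
            ∏ j ∈ range k, Pq (a j) := by
          rw [sum_columnFinset_succ]
          refine sum_congr rfl fun c hc => ?_
          rw [sum_congr rfl (hterm c hc), ← mul_sum, ih]
          ring
      _ = Pq b * ∏ j ∈ range (k + 1), Pq (a j) := by
          rw [← sum_mul, ← rankOneSum, rankOneSum_eq, prod_range_succ]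
          ring

def setColumn (j : ℕ) (r : ℕ → ℕ) (m : ℕ → ℕ → ℕ) : ℕ → ℕ → ℕ :=
  fun i => Function.update (m i) j (r i)

section setColumn

variable {j : ℕ} {r : ℕ → ℕ} {m : ℕ → ℕ → ℕ}

@[simp]
theorem setColumn_apply_self (i : ℕ) : setColumn j r m i j = r i :=
  Function.update_self ..

theorem setColumn_apply_of_ne {l : ℕ} (i : ℕ) (h : l ≠ j) : setColumn j r m i l = m i l :=
  Function.update_of_ne h ..

theorem setColumn_setColumn (s : ℕ → ℕ) : setColumn j r (setColumn j s m) = setColumn j r m :=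
  funext fun _ => Function.update_idem ..

theorem setColumn_eq_self : setColumn j (fun i => m i j) m = m :=
  funext fun i => Function.update_eq_self j (m i)

theorem sum_setColumn {N k : ℕ} (hk : k ≤ N + 1) :
    ∑ i ∈ range (k + 1), ∑ l ∈ Icc k (N + 1), setColumn (N + 1) r m i l =
      ∑ i ∈ range (k + 1), ∑ l ∈ Icc k N, m i l + partialSum r k := by
  rw [partialSum, ← sum_add_distrib]
  refine sum_congr rfl fun i _ => ?_
  rw [sum_Icc_succ_top hk, setColumn_apply_self]
  congr 1
  exact sum_congr rfl fun l hl => setColumn_apply_of_ne i (by simp at hl; omega)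

end setColumn

section IsKostant

variable {N : ℕ} {d : ℕ → ℕ} {m : ℕ → ℕ → ℕ}

theorem IsKostant.le {i j : ℕ} (hm : IsKostant N d m) (hij : i ≤ j) (hj : j ≤ N) : m i j ≤ d i :=
  calc m i j ≤ ∑ l ∈ Icc i N, m i l := single_le_sum (by simp) (mem_Icc.mpr ⟨hij, hj⟩)
    _ ≤ ∑ i' ∈ range (i + 1), ∑ l ∈ Icc i N, m i' l :=
        single_le_sum (f := fun i' => ∑ l ∈ Icc i N, m i' l) (by simp) (self_mem_range_succ i)
    _ = d i := (hm.2 i (hij.trans hj)).symm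

theorem finite_setOf_isKostant (N : ℕ) (d : ℕ → ℕ) : {m | IsKostant N d m}.Finite := by
  let B : ℕ × ℕ → ℕ := fun p => if p.1 ≤ p.2 ∧ p.2 ≤ N then d p.1 else 0
  have hB : (Function.support B).Finite :=
    ((Set.finite_Iic N).prod (Set.finite_Iic N)).subset fun p hp =>
      by_contra fun h => hp (if_neg fun hp => h ⟨hp.1.trans hp.2, hp.2⟩)
  refine ((Set.finite_Iic_of_finite_support hB).preimage
    Function.uncurry_injective.injOn).subset fun m hm p => ?_
  show m p.1 p.2 ≤ B p
  by_cases hp : p.1 ≤ p.2 ∧ p.2 ≤ N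
  · simpa [B, hp] using hm.le hp.1 hp.2
  · simp [B, hp, hm.1 _ _ hp]

noncomputable def kostantFinset (N : ℕ) (d : ℕ → ℕ) : Finset (ℕ → ℕ → ℕ) :=
  (finite_setOf_isKostant N d).toFinset

theorem mem_kostantFinset : m ∈ kostantFinset N d ↔ IsKostant N d m :=
  Set.Finite.mem_toFinset _

theorem kostantFinset_zero (d : ℕ → ℕ) : kostantFinset 0 d = {Pi.single 0 (Pi.single 0 (d 0))} := by
  ext m
  rw [mem_kostantFinset, mem_singleton]
  constructor
  · rintro ⟨hm, hd⟩
    have h00 : m 0 0 = d 0 := by simpa using (hd 0 le_rfl).symm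
    funext i j
    rcases eq_or_ne i 0 with rfl | hi
    · rcases eq_or_ne j 0 with rfl | hj
      · simpa using h00
      · simp [hj, hm 0 j (by omega)]
    · simp [hi, hm i j (by omega)]
  · rintro rfl
    refine ⟨fun i j hij => ?_, fun k hk => ?_⟩
    · rcases eq_or_ne i 0 with rfl | hi
      · simp [show j ≠ 0 by omega]
      · simp [hi]
    · obtain rfl : k = 0 := by omega
      simp

theorem IsKostant.eq_sum_add_partialSum (hm : IsKostant (N + 1) d m) {k : ℕ} (hk : k ≤ N + 1) :
    d k = ∑ i ∈ range (k + 1), ∑ j ∈ Icc k N, m i j + partialSum (fun i => m i (N + 1)) k := by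
  rw [hm.2 k hk, ← sum_setColumn hk, setColumn_eq_self]

theorem IsKostant.isColumn (hm : IsKostant (N + 1) d m) :
    IsColumn (N + 1) d (d (N + 1)) (fun i => m i (N + 1)) := by
  refine ⟨fun i hi => hm.1 i (N + 1) (by omega), ?_, fun j hj => ?_⟩
  · simpa using (hm.eq_sum_add_partialSum le_rfl).symm
  · have := hm.eq_sum_add_partialSum hj.le
    omega

theorem IsKostant.setColumn_zero (hm : IsKostant (N + 1) d m) :
    IsKostant N (fun k => d k - partialSum (fun i => m i (N + 1)) k) (setColumn (N + 1) 0 m) := by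
  refine ⟨fun i j hij => ?_, fun k hk => ?_⟩
  · rcases eq_or_ne j (N + 1) with rfl | hj
    · simp
    · rw [setColumn_apply_of_ne i hj, hm.1 i j (by omega)]
  · dsimp only
    rw [hm.eq_sum_add_partialSum (by omega), Nat.add_sub_cancel]
    exact sum_congr rfl fun i _ => sum_congr rfl fun j hj =>
      (setColumn_apply_of_ne i (by simp at hj; omega)).symm

theorem IsKostant.setColumn {r : ℕ → ℕ} (hr : IsColumn (N + 1) d (d (N + 1)) r)
    (hm : IsKostant N (fun k => d k - partialSum r k) m) :
    IsKostant (N + 1) d (setColumn (N + 1) r m) := by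
  obtain ⟨hr0, hrN, hrd⟩ := hr
  refine ⟨fun i j hij => ?_, fun k hk => ?_⟩
  · rcases eq_or_ne j (N + 1) with rfl | hj
    · rw [setColumn_apply_self, hr0 i (by omega)]
    · rw [setColumn_apply_of_ne i hj, hm.1 i j (by omega)]
  · rw [sum_setColumn hk]
    rcases Nat.lt_succ_iff_lt_or_eq.mp (Nat.lt_succ_of_le hk) with hk | rfl
    · have := hm.2 k (by omega)
      have := hrd k hk
      dsimp only at *
      omega
    · simp [hrN]

end IsKostant

theorem kpCodim_eq_sum (N : ℕ) (m : ℕ → ℕ → ℕ) :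
    kpCodim N m = ∑ u ∈ Icc 1 N, ∑ v ∈ Icc u N,
      (∑ i ∈ Icc 1 u, ∑ j ∈ Icc u v, m (i - 1) (j - 1)) * m u v := by
  simp only [sum_mul]
  calc kpCodim N m = ∑ i ∈ Icc 1 N, ∑ u ∈ Icc i N, ∑ v ∈ Icc u N, ∑ j ∈ Icc u v,
        m (i - 1) (j - 1) * m u v :=
        sum_congr rfl fun i _ => sum_congr rfl fun u _ =>
          sum_comm' fun j v => by simp only [mem_Icc]; omega
    _ = ∑ u ∈ Icc 1 N, ∑ i ∈ Icc 1 u, ∑ v ∈ Icc u N, ∑ j ∈ Icc u v, m (i - 1) (j - 1) * m u v :=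
        sum_comm' fun i u => by simp only [mem_Icc]; omega
    _ = _ := sum_congr rfl fun u _ => sum_comm

theorem sum_Icc_succ_sub_one {M : Type*} [AddCommMonoid M] (f : ℕ → M) (a b : ℕ) :
    ∑ j ∈ Icc (a + 1) (b + 1), f (j - 1) = ∑ j ∈ Icc a b, f j := by
  rw [← map_add_right_Icc, sum_map]
  rfl

theorem kpCodim_setColumn {N : ℕ} {d r : ℕ → ℕ} {m : ℕ → ℕ → ℕ}
    (hm : ∀ k ≤ N, d k - partialSum r k = ∑ i ∈ range (k + 1), ∑ j ∈ Icc k N, m i j) :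
    kpCodim (N + 1) (setColumn (N + 1) r m) = kpCodim N m + columnExponent (N + 1) d r := by
  have hold : ∀ u, ∀ v ∈ Icc u N,
      (∑ i ∈ Icc 1 u, ∑ j ∈ Icc u v, setColumn (N + 1) r m (i - 1) (j - 1)) *
        setColumn (N + 1) r m u v = (∑ i ∈ Icc 1 u, ∑ j ∈ Icc u v, m (i - 1) (j - 1)) * m u v := by
    intro u v hv
    rw [mem_Icc] at hv
    rw [setColumn_apply_of_ne u (by omega)]
    exact congrArg (· * _) (sum_congr rfl fun i _ => sum_congr rfl fun j hj =>
      setColumn_apply_of_ne _ (by simp at hj; omega))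
  have hnew : ∀ u ∈ Icc 1 (N + 1),
      (∑ i ∈ Icc 1 u, ∑ j ∈ Icc u (N + 1), setColumn (N + 1) r m (i - 1) (j - 1)) *
        setColumn (N + 1) r m u (N + 1) = r u * (d (u - 1) - partialSum r (u - 1)) := by
    intro u hu
    obtain ⟨w, rfl⟩ : ∃ w, u = w + 1 := ⟨u - 1, by simp at hu; omega⟩
    rw [setColumn_apply_self, mul_comm, Nat.add_sub_cancel, hm w (by simp at hu; omega),
      Nat.range_succ_eq_Icc_zero]
    refine congrArg (r (w + 1) * ·) ((sum_Icc_succ_sub_one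
      (fun i => ∑ j ∈ Icc (w + 1) (N + 1), setColumn (N + 1) r m i (j - 1)) 0 w).trans
        (sum_congr rfl fun i _ => ?_))
    rw [sum_Icc_succ_sub_one (setColumn (N + 1) r m i)]
    exact sum_congr rfl fun j hj => setColumn_apply_of_ne _ (by simp at hj; omega)
  calc kpCodim (N + 1) (setColumn (N + 1) r m)
      = ∑ u ∈ Icc 1 (N + 1), (∑ v ∈ Icc u N, (∑ i ∈ Icc 1 u, ∑ j ∈ Icc u v, m (i - 1) (j - 1)) *
          m u v + r u * (d (u - 1) - partialSum r (u - 1))) := by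
        rw [kpCodim_eq_sum]
        refine sum_congr rfl fun u hu => ?_
        rw [sum_Icc_succ_top (by simp at hu; omega), sum_congr rfl (hold u), hnew u hu]
    _ = kpCodim N m + columnExponent (N + 1) d r := by
        rw [sum_add_distrib, sum_Icc_succ_top (by omega : 1 ≤ N + 1),
          Icc_eq_empty_of_lt N.lt_succ_self, sum_empty, add_zero, kpCodim_eq_sum, columnExponent]

theorem PqKP_setColumn (N : ℕ) (r : ℕ → ℕ) (m : ℕ → ℕ → ℕ) :
    PqKP (N + 1) (setColumn (N + 1) r m) = (∏ i ∈ range (N + 1 + 1), Pq (r i)) * PqKP N m := by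
  have hrow : ∀ i ∈ range (N + 1 + 1), ∏ j ∈ Icc i (N + 1), Pq (setColumn (N + 1) r m i j) =
      (∏ j ∈ Icc i N, Pq (m i j)) * Pq (r i) := by
    intro i hi
    rw [prod_Icc_succ_top (by simp at hi; omega), setColumn_apply_self]
    congr 1
    exact prod_congr rfl fun j hj => by rw [setColumn_apply_of_ne i (by simp at hj; omega)]
  rw [PqKP, prod_congr rfl hrow, prod_mul_distrib, mul_comm, PqKP,
    prod_range_succ (fun i => ∏ j ∈ Icc i N, Pq (m i j)), Icc_eq_empty_of_lt N.lt_succ_self,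
    prod_empty, mul_one]

theorem sum_kostantFinset_succ {M : Type*} [AddCommMonoid M] (N : ℕ) (d : ℕ → ℕ)
    (f : (ℕ → ℕ → ℕ) → M) :
    ∑ m ∈ kostantFinset (N + 1) d, f m = ∑ r ∈ columnFinset (N + 1) d (d (N + 1)),
      ∑ m ∈ kostantFinset N (fun k => d k - partialSum r k), f (setColumn (N + 1) r m) := by
  rw [sum_sigma']
  refine (sum_nbij' (fun p : (_ : ℕ → ℕ) × (ℕ → ℕ → ℕ) => setColumn (N + 1) p.1 p.2)
    (fun m => ⟨fun i => m i (N + 1), setColumn (N + 1) 0 m⟩) ?_ ?_ ?_ ?_ fun _ _ => rfl).symm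
  · rintro ⟨r, m⟩ hp
    simp only [mem_sigma, mem_columnFinset, mem_kostantFinset] at hp
    exact mem_kostantFinset.mpr (hp.2.setColumn hp.1)
  · intro m hm
    have hm := mem_kostantFinset.mp hm
    simp only [mem_sigma, mem_columnFinset, mem_kostantFinset]
    exact ⟨hm.isColumn, hm.setColumn_zero⟩
  · rintro ⟨r, m⟩ hp
    simp only [mem_sigma, mem_kostantFinset] at hp
    refine Sigma.ext (funext fun i => setColumn_apply_self i) (heq_of_eq ?_)
    have hcol : (fun i => m i (N + 1)) = 0 := funext fun i => hp.2.1 i (N + 1) (by omega)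
    rw [setColumn_setColumn, ← hcol, setColumn_eq_self]
  · intro m _
    rw [setColumn_setColumn, setColumn_eq_self]

theorem sum_kostantFinset (N : ℕ) (d : ℕ → ℕ) :
    ∑ m ∈ kostantFinset N d, X ^ kpCodim N m * PqKP N m = ∏ i ∈ range (N + 1), Pq (d i) := by
  induction N generalizing d with
  | zero => simp [kostantFinset_zero, kpCodim, PqKP]
  | succ N ih =>
    calc _ = ∑ r ∈ columnFinset (N + 1) d (d (N + 1)), X ^ columnExponent (N + 1) d r *
          ((∏ i ∈ range (N + 1 + 1), Pq (r i)) *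
            ∏ k ∈ range (N + 1), Pq (d k - partialSum r k)) := by
          rw [sum_kostantFinset_succ]
          refine sum_congr rfl fun r _ => ?_
          rw [← ih, mul_sum, mul_sum]
          refine sum_congr rfl fun m hm => ?_
          rw [kpCodim_setColumn (mem_kostantFinset.mp hm).2, PqKP_setColumn, pow_add]
          ring
      _ = _ := by rw [sum_columnFinset, prod_range_succ _ (N + 1), mul_comm]

theorem stmt4_general (N : ℕ) (d : ℕ → ℕ) :
    ∏ i ∈ Finset.range (N + 1), Pq (d i) =
      ∑ᶠ m ∈ {m : ℕ → ℕ → ℕ | IsKostant N d m},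
        (PowerSeries.X : PowerSeries ℚ) ^ kpCodim N m * PqKP N m := by
  rw [← (finite_setOf_isKostant N d).coe_toFinset, finsum_mem_coe_finset]
  exact (sum_kostantFinset N d).symm

/-- The identity `P_d = Σ_{m ⊢ d} q^{c(m)} P_m` in `ℚ⟦q⟧`. -/
theorem stmt4 (N : ℕ) (hN : 1 ≤ N) (d : ℕ → ℕ) :
    ∏ i ∈ Finset.range (N + 1), Pq (d i) =
      ∑ᶠ m ∈ {m : ℕ → ℕ → ℕ | IsKostant N d m},
        (PowerSeries.X : PowerSeries ℚ) ^ kpCodim N m * PqKP N m :=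
  stmt4_general N d
end

section
/- Fix N ≥ 1, d ∈ ℕ^{N+1}, and integers 0 ≤ r ≤ s ≤ min_i d_i. Then in ℚ[[q]]: Q^{s−r}_{d−r} = (Π_{t=s−r+1}^{s} (1 − q^t)) · Q^s_d, where d − r denotes the dimension vector obtained by subtracting r from every component of d. -/
/-- `Q^r_d = Σ_{m ⊢ d, m_{0N} = r} q^{c(m)} P_m ∈ ℚ⟦q⟧`. -/
noncomputable def Qq (N : ℕ) (d : ℕ → ℕ) (r : ℕ) : PowerSeries ℚ :=
  ∑ᶠ m ∈ {m : ℕ → ℕ → ℕ | IsKostant N d m ∧ m 0 N = r},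
    (PowerSeries.X : PowerSeries ℚ) ^ kpCodim N m * PqKP N m

/-- `min_{0 ≤ i ≤ N} d_i`. -/
def dmin (N : ℕ) (d : ℕ → ℕ) : ℕ := (Finset.range (N + 1)).inf' ⟨0, by simp⟩ d

/-!
Adding `r` to the multiplicity `m₀ₙ` of the longest root `[0, N]` is a bijection
`M^{s-r}_{d-r} → M^s_d`, because `[0, N]` passes through every vertex. It leaves `c(m)`
unchanged, since `c` never reads `m₀ₙ`, and it replaces the factor `P_{s-r}` of `P_m` by
`P_s = P_{s-r} / ∏_{t=s-r+1}^{s} (1 - q^t)`.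
-/

open Finset PowerSeries

lemma Pq_eq_prod_mul_Pq {a b : ℕ} (hab : a ≤ b) :
    Pq a = (∏ t ∈ Icc (a + 1) b, (1 - (X : ℚ⟦X⟧) ^ t)) * Pq b := by
  have hsplit : Icc 1 b = Icc 1 a ∪ Icc (a + 1) b := by
    ext t; simp only [mem_union, mem_Icc]; omega
  have hdisj : Disjoint (Icc 1 a) (Icc (a + 1) b) := by
    rw [disjoint_left]; intro t; simp only [mem_Icc]; omega
  have hcancel : ∏ t ∈ Icc (a + 1) b, (1 - (X : ℚ⟦X⟧) ^ t) * (1 - X ^ t)⁻¹ = 1 :=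
    prod_eq_one fun t ht => PowerSeries.mul_inv_cancel _ (by
      simp [zero_pow (show t ≠ 0 by simp only [mem_Icc] at ht; omega)])
  rw [Pq, Pq, hsplit, prod_union hdisj, mul_left_comm, ← prod_mul_distrib, hcancel, mul_one]

/-- `r` copies of the longest root `[0, N]`. -/
def longRoot (N r : ℕ) : ℕ → ℕ → ℕ := fun i j => if i = 0 ∧ j = N then r else 0

lemma sum_longRoot {N k : ℕ} (r : ℕ) (hk : k ≤ N) :
    ∑ i ∈ range (k + 1), ∑ j ∈ Icc k N, longRoot N r i j = r := by
  simp [longRoot, ite_and, hk]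

lemma isKostant_add_longRoot_iff {N r : ℕ} {d : ℕ → ℕ} {m : ℕ → ℕ → ℕ}
    (hr : ∀ k ≤ N, r ≤ d k) :
    IsKostant N d (m + longRoot N r) ↔ IsKostant N (fun k => d k - r) m := by
  unfold IsKostant
  simp only [Pi.add_apply, sum_add_distrib]
  refine and_congr (forall₂_congr fun i j => imp_congr_right fun hij => ?_)
    (forall₂_congr fun k hk => ?_)
  · have : ¬(i = 0 ∧ j = N) := by omega
    simp [longRoot, this]
  · rw [sum_longRoot r hk]
    have := hr k hk
    omega

lemma kpCodim_add_longRoot (N r : ℕ) (m : ℕ → ℕ → ℕ) :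
    kpCodim N (m + longRoot N r) = kpCodim N m := by
  unfold kpCodim
  refine sum_congr rfl fun i hi => sum_congr rfl fun u hu =>
    sum_congr rfl fun j hj => sum_congr rfl fun v hv => ?_
  simp only [mem_Icc] at hi hu hj hv
  have h1 : ¬(i - 1 = 0 ∧ j - 1 = N) := by omega
  have h2 : ¬(u = 0 ∧ v = N) := by omega
  simp [longRoot, h1, h2]

lemma PqKP_eq_Pq_mul_prod_erase (N : ℕ) (m : ℕ → ℕ → ℕ) :
    PqKP N m = Pq (m 0 N) *
      ∏ x ∈ ((range (N + 1)).sigma fun i => Icc i N).erase ⟨0, N⟩, Pq (m x.1 x.2) := by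
  have hmem : (⟨0, N⟩ : Σ _ : ℕ, ℕ) ∈ (range (N + 1)).sigma fun i => Icc i N := by simp
  rw [PqKP, prod_sigma', mul_prod_erase _ (fun x : Σ _ : ℕ, ℕ => Pq (m x.1 x.2)) hmem]

lemma PqKP_eq_prod_mul_PqKP_add_longRoot (N r : ℕ) (m : ℕ → ℕ → ℕ) :
    PqKP N m = (∏ t ∈ Icc (m 0 N + 1) (m 0 N + r), (1 - (X : ℚ⟦X⟧) ^ t)) *
      PqKP N (m + longRoot N r) := by
  have hrest : ∀ x ∈ ((range (N + 1)).sigma fun i => Icc i N).erase ⟨0, N⟩,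
      Pq ((m + longRoot N r) x.1 x.2) = Pq (m x.1 x.2) := by
    rintro ⟨i, j⟩ hx
    have : ¬(i = 0 ∧ j = N) := by rintro ⟨rfl, rfl⟩; simp at hx
    simp [longRoot, this]
  rw [PqKP_eq_Pq_mul_prod_erase, PqKP_eq_Pq_mul_prod_erase, prod_congr rfl hrest,
    Pq_eq_prod_mul_Pq (Nat.le_add_right (m 0 N) r)]
  simp [longRoot, mul_assoc]

lemma bijOn_add_longRoot {N r s : ℕ} {d : ℕ → ℕ} (hr : ∀ k ≤ N, r ≤ d k) (hrs : r ≤ s) :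
    Set.BijOn (· + longRoot N r)
      {m | IsKostant N (fun k => d k - r) m ∧ m 0 N = s - r}
      {m | IsKostant N d m ∧ m 0 N = s} := by
  refine ⟨?_, fun m _ m' _ h => add_right_cancel h, ?_⟩
  · rintro m ⟨hm, hm0⟩
    refine ⟨(isKostant_add_longRoot_iff hr).2 hm, ?_⟩
    simp [longRoot, hm0, hrs]
  · rintro m ⟨hm, hm0⟩
    have hle : longRoot N r ≤ m := fun i j => by
      unfold longRoot; split_ifs with h
      · rw [h.1, h.2, hm0]; exact hrs
      · exact Nat.zero_le _
    refine ⟨m - longRoot N r, ⟨(isKostant_add_longRoot_iff hr).1 ?_, ?_⟩,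
      tsub_add_cancel_of_le hle⟩
    · rwa [tsub_add_cancel_of_le hle]
    · simp [longRoot, hm0]

lemma le_dmin_iff {N a : ℕ} {d : ℕ → ℕ} : a ≤ dmin N d ↔ ∀ k ≤ N, a ≤ d k :=
  (le_inf'_iff _ d).trans (by simp)

theorem stmt6_general (N : ℕ) (d : ℕ → ℕ) (r s : ℕ) (hrs : r ≤ s)
    (hs : s ≤ dmin N d) :
    Qq N (fun i => d i - r) (s - r) =
      (∏ t ∈ Finset.Icc (s - r + 1) s, (1 - (PowerSeries.X : PowerSeries ℚ) ^ t)) *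
        Qq N d s := by
  have hr : ∀ k ≤ N, r ≤ d k := fun k hk => hrs.trans (le_dmin_iff.1 hs k hk)
  -- `ℚ⟦X⟧` has no zero divisors, so the factor leaves `∑ᶠ` without a finiteness argument.
  rw [Qq, Qq, mul_finsum_mem]
  refine finsum_mem_eq_of_bijOn _ (bijOn_add_longRoot hr hrs) fun m ⟨_, hm0⟩ => ?_
  rw [kpCodim_add_longRoot, PqKP_eq_prod_mul_PqKP_add_longRoot N r m, hm0,
    Nat.sub_add_cancel hrs]
  ring

/-- The shift identity `Q^{s−r}_{d−r} = (Π_{t=s−r+1}^{s} (1 − q^t)) · Q^s_d`. -/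
theorem stmt6 (N : ℕ) (hN : 1 ≤ N) (d : ℕ → ℕ) (r s : ℕ) (hrs : r ≤ s)
    (hs : s ≤ dmin N d) :
    Qq N (fun i => d i - r) (s - r) =
      (∏ t ∈ Finset.Icc (s - r + 1) s, (1 - (PowerSeries.X : PowerSeries ℚ) ^ t)) *
        Qq N d s :=
  stmt6_general N d r s hrs hs
end

section
/- Let N ≥ 1 and let d'_0 ≤ d'_1 ≤ … ≤ d'_N be a weakly increasing sequence of nonnegative integers with d'_0 ≥ 1. Let m = max{ l ∈ {1,…,N} : Σ_{i=0}^l d'_i ≥ l·d'_l }, let ŝ ∈ ℤ^m be the vector with ŝ_i = d'_0 − d'_i for 1 ≤ i ≤ m, and let D̂ = min{ ‖ŝ − v‖² : v ∈ ℤ^m, Σ_{i=1}^m v_i = d'_0 } (squared Euclidean distance). Then min{ G(e) : e ∈ ℕ^N, Σ_{i=1}^N e_i = d'_0 } = (1/2)·( D̂ + (d'_0)² − Σ_{i=1}^m (d'_i − d'_0)² ), where G(e) = Σ_{1 ≤ j ≤ i ≤ N} e_i (e_j + d'_j − d'_{j−1}). Moreover, the number of e attaining the left-hand minimum equals the number of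 v ∈ ℤ^m with Σ v_i = d'_0 attaining D̂. -/
/-- The feasible set of the quadratic integer program: tuples `e = (e_1,…,e_N) ∈ ℕ^N`
with `Σ_{i=1}^N e_i = d'_0`. -/
def QipSet (N : ℕ) (d' : ℕ → ℕ) : Set (ℕ → ℕ) :=
  {e | (∀ i : ℕ, ¬(1 ≤ i ∧ i ≤ N) → e i = 0) ∧ ∑ i ∈ Finset.Icc 1 N, e i = d' 0}

/-- `G(e) = Σ_{1 ≤ j ≤ i ≤ N} e_i (e_j + d'_j − d'_{j−1})`, the objective of (QIP). -/
def Gqip (N : ℕ) (d' : ℕ → ℕ) (e : ℕ → ℕ) : ℕ :=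
  ∑ i ∈ Finset.Icc 1 N, ∑ j ∈ Finset.Icc 1 i, e i * (e j + d' j - d' (j - 1))

/-- The minimal value of the quadratic integer program. -/
noncomputable def QipMin (N : ℕ) (d' : ℕ → ℕ) : ℕ :=
  sInf {n : ℕ | ∃ e ∈ QipSet N d', Gqip N d' e = n}

open Finset

section AuxLemmas

lemma aux_quad_nonneg (a : ℤ) : 0 ≤ a * (a - 1) := by
  rcases le_or_gt a 0 with h | h
  · nlinarith [mul_nonneg (by linarith : (0:ℤ) ≤ -a) (by linarith : (0:ℤ) ≤ 1 - a)]
  · exact mul_nonneg (by linarith) (by omega)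

lemma aux_quad_zero (a : ℤ) : a * (a - 1) = 0 ↔ a = 0 ∨ a = 1 := by
  rw [mul_eq_zero, sub_eq_zero]

lemma aux_telescope (f : ℕ → ℤ) (n : ℕ) :
    ∑ j ∈ Icc 1 n, (f j - f (j - 1)) = f n - f 0 := by
  induction n with
  | zero => simp
  | succ n ih => rw [Finset.sum_Icc_succ_top (by omega)]; simp at ih ⊢; omega

lemma aux_sum_sq_double (f : ℕ → ℤ) (n : ℕ) :
    2 * ∑ i ∈ Icc 1 n, (f i * ∑ j ∈ Icc 1 i, f j)
      = (∑ i ∈ Icc 1 n, f i) ^ 2 + ∑ i ∈ Icc 1 n, (f i) ^ 2 := by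
  induction n with
  | zero => simp
  | succ n ih =>
    rw [Finset.sum_Icc_succ_top (show 1 ≤ n + 1 by omega),
      Finset.sum_Icc_succ_top (show 1 ≤ n + 1 by omega),
      Finset.sum_Icc_succ_top (show 1 ≤ n + 1 by omega)]
    linear_combination ih

lemma aux_sum_Icc_one (m : ℕ) (f : ℕ → ℤ) :
    ∑ i ∈ Icc 1 m, f i = ∑ i ∈ range m, f (i + 1) := by
  induction m with
  | zero => simp
  | succ n ih => rw [Finset.sum_Icc_succ_top (by omega), Finset.sum_range_succ, ih]

lemma aux_split (N m : ℕ) (hmN : m ≤ N) (g : ℕ → ℤ) :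
    ∑ i ∈ Icc 1 N, g i = ∑ i ∈ Icc 1 m, g i + ∑ i ∈ Ioc m N, g i := by
  have h1 : Icc 1 N = Ioc 0 N := by ext x; simp; omega
  have h2 : Icc 1 m = Ioc 0 m := by ext x; simp; omega
  rw [h1, h2]
  exact (Finset.sum_Ioc_consecutive g (Nat.zero_le m) hmN).symm

lemma sumIcc (m : ℕ) (d' : ℕ → ℕ) :
    ∑ i ∈ Icc 1 m, (d' i : ℤ) = ∑ i ∈ range (m + 1), (d' i : ℤ) - d' 0 := by
  rw [aux_sum_Icc_one, Finset.sum_range_succ' (fun i => (d' i : ℤ)) m]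
  ring

/-- The "defect" of a feasible point with respect to the tangent-line lower bound. -/
def Del (N m : ℕ) (d' : ℕ → ℕ) (q : ℤ) (e : ℕ → ℕ) : ℤ :=
  (∑ i ∈ Icc 1 m, ((e i : ℤ) + d' i - d' 0 - q) * ((e i : ℤ) + d' i - d' 0 - q - 1))
  + ∑ i ∈ Ioc m N, (e i : ℤ) * ((e i : ℤ) + 2 * ((d' i : ℤ) - d' 0) - (2 * q + 1))

lemma mIdentL (m : ℕ) (sh : Fin m → ℤ) (q t r b : ℤ) (htqr : (m : ℤ) * q + r = t)
    (hsh : ∑ i, sh i = b - t) (v : Fin m → ℤ) (hv : ∑ i, v i = b) :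
    ∑ i, (sh i - v i) ^ 2
      = ((m : ℤ) * q ^ 2 + (2 * q + 1) * r)
        + ∑ i, ((v i - sh i - q) * (v i - sh i - q - 1)) := by
  have hw : ∑ i, (v i - sh i) = t := by
    rw [Finset.sum_sub_distrib, hv, hsh]; ring
  have e1 : ∀ i ∈ (univ : Finset (Fin m)), (sh i - v i) ^ 2
      = (v i - sh i - q) * (v i - sh i - q - 1) + (2 * q + 1) * (v i - sh i) - (q ^ 2 + q) :=
    fun i _ => by ring
  rw [Finset.sum_congr rfl e1, Finset.sum_sub_distrib, Finset.sum_add_distrib,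
    ← Finset.mul_sum, hw, Finset.sum_const, Finset.card_univ, Fintype.card_fin,
    nsmul_eq_mul]
  linear_combination (-(2 * q + 1)) * htqr

lemma NIdentL (N m : ℕ) (hmN : m ≤ N) (d' : ℕ → ℕ) (q r t : ℤ)
    (ht : t = ∑ i ∈ range (m + 1), (d' i : ℤ) - m * d' 0)
    (htqr : (m : ℤ) * q + r = t)
    (e : ℕ → ℕ) (hes : ∑ i ∈ Icc 1 N, (e i : ℤ) = (d' 0 : ℤ)) :
    ∑ i ∈ Icc 1 N, ((e i : ℤ) + d' i - d' 0) ^ 2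
      = ((m : ℤ) * q ^ 2 + (2 * q + 1) * r)
        + (∑ i ∈ Icc 1 N, ((d' i : ℤ) - d' 0) ^ 2
            - ∑ i ∈ Icc 1 m, ((d' i : ℤ) - d' 0) ^ 2)
        + Del N m d' q e := by
  have hsumc : ∑ i ∈ Icc 1 m, ((d' i : ℤ) - d' 0) = t - d' 0 := by
    rw [Finset.sum_sub_distrib, sumIcc, Finset.sum_const, Nat.card_Icc,
      Nat.add_sub_cancel, nsmul_eq_mul, ht]
    ring
  have h1 := aux_split N m hmN (fun i => ((e i : ℤ) + d' i - d' 0) ^ 2)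
  have h2 : ∑ i ∈ Icc 1 m, ((e i : ℤ) + d' i - d' 0) ^ 2
      = (∑ i ∈ Icc 1 m, ((e i : ℤ) + d' i - d' 0 - q) * ((e i : ℤ) + d' i - d' 0 - q - 1))
        + (2 * q + 1) * (∑ i ∈ Icc 1 m, ((e i : ℤ) + d' i - d' 0)) - m * (q ^ 2 + q) := by
    have e2 : ∀ i ∈ Icc 1 m, ((e i : ℤ) + d' i - d' 0) ^ 2
        = ((e i : ℤ) + d' i - d' 0 - q) * ((e i : ℤ) + d' i - d' 0 - q - 1)
          + (2 * q + 1) * ((e i : ℤ) + d' i - d' 0) - (q ^ 2 + q) := fun i _ => by ring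
    rw [Finset.sum_congr rfl e2, Finset.sum_sub_distrib, Finset.sum_add_distrib,
      ← Finset.mul_sum, Finset.sum_const, Nat.card_Icc, Nat.add_sub_cancel, nsmul_eq_mul]
    try ring
  have h3 : ∑ i ∈ Ioc m N, ((e i : ℤ) + d' i - d' 0) ^ 2
      = (∑ i ∈ Ioc m N, (e i : ℤ) * ((e i : ℤ) + 2 * ((d' i : ℤ) - d' 0) - (2 * q + 1)))
        + ∑ i ∈ Ioc m N, ((d' i : ℤ) - d' 0) ^ 2
        + (2 * q + 1) * ∑ i ∈ Ioc m N, (e i : ℤ) := by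
    have e3 : ∀ i ∈ Ioc m N, ((e i : ℤ) + d' i - d' 0) ^ 2
        = (e i : ℤ) * ((e i : ℤ) + 2 * ((d' i : ℤ) - d' 0) - (2 * q + 1))
          + ((d' i : ℤ) - d' 0) ^ 2 + (2 * q + 1) * (e i : ℤ) := fun i _ => by ring
    rw [Finset.sum_congr rfl e3]
    rw [Finset.sum_add_distrib, Finset.sum_add_distrib, Finset.mul_sum]
  have h4 : ∑ i ∈ Icc 1 m, (e i : ℤ) + ∑ i ∈ Ioc m N, (e i : ℤ) = (d' 0 : ℤ) := by
    rw [← aux_split N m hmN]; exact hes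
  have h5 : ∑ i ∈ Icc 1 m, ((e i : ℤ) + d' i - d' 0)
      = ∑ i ∈ Icc 1 m, (e i : ℤ) + (t - d' 0) := by
    have e5 : ∀ i ∈ Icc 1 m, ((e i : ℤ) + d' i - d' 0)
        = (e i : ℤ) + ((d' i : ℤ) - d' 0) := fun i _ => by ring
    rw [Finset.sum_congr rfl e5, Finset.sum_add_distrib, hsumc]
  have h6 := aux_split N m hmN (fun i => ((d' i : ℤ) - d' 0) ^ 2)
  unfold Del
  linear_combination h1 + h2 + h3 - h6 + (2 * q + 1) * h4 + (2 * q + 1) * h5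
    - (2 * q + 1) * htqr

lemma gqip_formula (N : ℕ) (d' : ℕ → ℕ)
    (mono : ∀ a b : ℕ, a ≤ b → b ≤ N → d' a ≤ d' b) (e : ℕ → ℕ) :
    2 * (Gqip N d' e : ℤ) = (∑ i ∈ Icc 1 N, (e i : ℤ)) ^ 2
      + ∑ i ∈ Icc 1 N, (((e i : ℤ) + d' i - d' 0) ^ 2 - ((d' i : ℤ) - d' 0) ^ 2) := by
  have step1 : (Gqip N d' e : ℤ)
      = ∑ i ∈ Icc 1 N, ((e i : ℤ) * (∑ j ∈ Icc 1 i, (e j : ℤ))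
          + (e i : ℤ) * ((d' i : ℤ) - d' 0)) := by
    unfold Gqip
    push_cast
    refine Finset.sum_congr rfl (fun i hi => ?_)
    have hiN : i ≤ N := (Finset.mem_Icc.mp hi).2
    have hinner : ∀ j ∈ Icc 1 i,
        (e i : ℤ) * ((e j + d' j - d' (j - 1) : ℕ) : ℤ)
          = (e i : ℤ) * ((e j : ℤ) + ((d' j : ℤ) - (d' (j - 1) : ℤ))) := by
      intro j hj
      obtain ⟨hj1, hj2⟩ := Finset.mem_Icc.mp hj
      have hle : d' (j - 1) ≤ d' j := mono (j - 1) j (by omega) (by omega)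
      have hle2 : d' (j - 1) ≤ e j + d' j := by omega
      push_cast [Nat.cast_sub hle2]
      ring
    rw [Finset.sum_congr rfl hinner, ← Finset.mul_sum, Finset.sum_add_distrib,
      aux_telescope (fun j => (d' j : ℤ)) i]
    ring
  rw [step1, Finset.sum_add_distrib, mul_add, aux_sum_sq_double (fun i => (e i : ℤ)) N]
  have h2 : ∑ i ∈ Icc 1 N, (((e i : ℤ) + d' i - d' 0) ^ 2 - ((d' i : ℤ) - d' 0) ^ 2)
      = ∑ i ∈ Icc 1 N, ((e i : ℤ) ^ 2 + 2 * ((e i : ℤ) * ((d' i : ℤ) - d' 0))) := by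
    refine Finset.sum_congr rfl (fun i _ => by ring)
  rw [h2, Finset.sum_add_distrib, ← Finset.mul_sum]
  ring

/-- Padding a vector `v ∈ ℤ^m` by zeros into an element of `ℕ^N`. -/
def PhiMap (m : ℕ) (v : Fin m → ℤ) : ℕ → ℕ :=
  fun i => if h : 1 ≤ i ∧ i - 1 < m then (v ⟨i - 1, h.2⟩).toNat else 0

lemma PhiMap_zero (m : ℕ) (v : Fin m → ℤ) (i : ℕ) (h : ¬(1 ≤ i ∧ i - 1 < m)) :
    PhiMap m v i = 0 := by
  simp only [PhiMap]; exact dif_neg h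

lemma PhiMap_eval (m : ℕ) (v : Fin m → ℤ) (i : ℕ) (h1 : 1 ≤ i) (h2 : i - 1 < m) :
    PhiMap m v i = (v ⟨i - 1, h2⟩).toNat := by
  simp only [PhiMap]; rw [dif_pos ⟨h1, h2⟩]

lemma PhiMap_succ (m : ℕ) (v : Fin m → ℤ) (j : Fin m) :
    PhiMap m v ((j : ℕ) + 1) = (v j).toNat := by
  rw [PhiMap_eval m v ((j : ℕ) + 1) (by omega) (by simpa using j.isLt)]
  exact congrArg Int.toNat (congrArg v (Fin.ext (by simp)))

lemma PhiMap_sum (N m : ℕ) (hmN : m ≤ N) (v : Fin m → ℤ) (hv : ∀ i, 0 ≤ v i) :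
    ∑ i ∈ Icc 1 N, (PhiMap m v i : ℤ) = ∑ i, v i := by
  rw [aux_split N m hmN]
  have h2 : ∑ i ∈ Ioc m N, (PhiMap m v i : ℤ) = 0 :=
    Finset.sum_eq_zero fun i hi => by
      obtain ⟨hmi, _⟩ := Finset.mem_Ioc.mp hi
      rw [PhiMap_zero m v i (by omega)]
      rfl
  rw [h2, add_zero, aux_sum_Icc_one m (fun i => (PhiMap m v i : ℤ)),
    ← Fin.sum_univ_eq_sum_range (fun i => (PhiMap m v (i + 1) : ℤ)) m]
  refine Finset.sum_congr rfl fun j _ => ?_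
  rw [PhiMap_succ m v j, Int.toNat_of_nonneg (hv j)]

end AuxLemmas

/-- The optimal value of (QIP) equals `(D̂ + (d'_0)² − Σ_{i=1}^m (d'_i − d'_0)²)/2`,
where `D̂` is the squared distance from `ŝ = (d'_0 − d'_i)_{i=1}^m` to the nearest
integer point of the hyperplane `Σ x_i = d'_0`; the numbers of minimizers agree. -/
theorem stmt10 (N : ℕ) (hN : 1 ≤ N) (d' : ℕ → ℕ)
    (hmono : ∀ i : ℕ, i < N → d' i ≤ d' (i + 1)) (hd0 : 1 ≤ d' 0)
    (m : ℕ) (hm1 : 1 ≤ m) (hmN : m ≤ N)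
    (hmle : (m : ℤ) * d' m ≤ ∑ i ∈ Finset.range (m + 1), (d' i : ℤ))
    (hmax : ∀ l : ℕ, m < l → l ≤ N →
      ∑ i ∈ Finset.range (l + 1), (d' i : ℤ) < (l : ℤ) * d' l) :
    let sh : Fin m → ℤ := fun i => (d' 0 : ℤ) - (d' ((i : ℕ) + 1) : ℤ)
    let Dhat : ℕ := sInf {n : ℕ | ∃ v : Fin m → ℤ,
      (∑ i, v i) = (d' 0 : ℤ) ∧ (∑ i, (sh i - v i) ^ 2) = (n : ℤ)}
    2 * (QipMin N d' : ℤ) =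
        (Dhat : ℤ) + (d' 0 : ℤ) ^ 2 - ∑ i ∈ Finset.Icc 1 m, ((d' i : ℤ) - (d' 0 : ℤ)) ^ 2 ∧
      {e ∈ QipSet N d' | Gqip N d' e = QipMin N d'}.ncard =
        {v : Fin m → ℤ |
          (∑ i, v i) = (d' 0 : ℤ) ∧ (∑ i, (sh i - v i) ^ 2) = (Dhat : ℤ)}.ncard := by
  intro sh Dhat
  have hsh_def : sh = fun i : Fin m => (d' 0 : ℤ) - (d' ((i : ℕ) + 1) : ℤ) := rfl
  -- monotonicity on [0, N]
  have mono : ∀ a b : ℕ, a ≤ b → b ≤ N → d' a ≤ d' b := by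
    intro a b hab
    induction b, hab using Nat.le_induction with
    | base => intro _; exact le_rfl
    | succ b hab ih => intro hbN; exact le_trans (ih (by omega)) (hmono b (by omega))
  set t : ℤ := ∑ i ∈ Finset.range (m + 1), (d' i : ℤ) - m * d' 0 with ht
  set q : ℤ := t / (m : ℤ) with hqdef
  set r : ℤ := t % (m : ℤ) with hrdef
  have hm0 : (0 : ℤ) < m := by exact_mod_cast hm1
  have htqr : (m : ℤ) * q + r = t := Int.mul_ediv_add_emod t m
  have hr0 : 0 ≤ r := Int.emod_nonneg t hm0.ne'
  have hrm : r < m := Int.emod_lt_of_pos t hm0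
  have hd0m : (d' 0 : ℤ) ≤ d' m := by exact_mod_cast mono 0 m (by omega) hmN
  have hqge : (d' m : ℤ) - d' 0 ≤ q := by
    rw [hqdef, Int.le_ediv_iff_mul_le hm0, ht]
    nlinarith [hmle]
  have hq0 : 0 ≤ q := le_trans (by linarith) hqge
  have hqlt : ∀ i : ℕ, m < i → i ≤ N → q + 1 ≤ (d' i : ℤ) - d' 0 := by
    intro i him hiN
    have h1 := hmax (m + 1) (by omega) (by omega)
    have h2 : ∑ j ∈ Finset.range (m + 2), (d' j : ℤ)
        = ∑ j ∈ Finset.range (m + 1), (d' j : ℤ) + d' (m + 1) :=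
      Finset.sum_range_succ _ _
    have hq1 : q < (d' (m + 1) : ℤ) - d' 0 := by
      rw [hqdef, Int.ediv_lt_iff_lt_mul hm0, ht]
      push_cast at h1
      nlinarith [h1, h2]
    have h3 : (d' (m + 1) : ℤ) ≤ d' i := by
      exact_mod_cast mono (m + 1) i (by omega) hiN
    linarith
  have hsumIccZ : ∑ i ∈ Icc 1 m, (d' i : ℤ) = t + m * d' 0 - d' 0 := by
    rw [sumIcc, ht]; ring
  have hsh : (∑ i, sh i) = (d' 0 : ℤ) - t := by
    rw [hsh_def]
    have h : ∑ i : Fin m, (d' ((i : ℕ) + 1) : ℤ) = ∑ i ∈ Icc 1 m, (d' i : ℤ) := by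
      rw [aux_sum_Icc_one m (fun i => (d' i : ℤ))]
      exact Fin.sum_univ_eq_sum_range (fun i => (d' (i + 1) : ℤ)) m
    rw [Finset.sum_sub_distrib, h, hsumIccZ, Finset.sum_const, Finset.card_univ,
      Fintype.card_fin, nsmul_eq_mul]
    ring
  have mIdent : ∀ v : Fin m → ℤ, (∑ i, v i) = (d' 0 : ℤ) →
      ∑ i, (sh i - v i) ^ 2 = ((m : ℤ) * q ^ 2 + (2 * q + 1) * r)
        + ∑ i, ((v i - sh i - q) * (v i - sh i - q - 1)) :=
    fun v hv => mIdentL m sh q t r (d' 0) htqr hsh v hv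
  have mEqchar : ∀ v : Fin m → ℤ, (∑ i, v i) = (d' 0 : ℤ) →
      ((∑ i, (sh i - v i) ^ 2 = (m : ℤ) * q ^ 2 + (2 * q + 1) * r)
        ↔ ∀ i, v i - sh i = q ∨ v i - sh i = q + 1) := by
    intro v hv
    rw [mIdent v hv]
    constructor
    · intro h
      have hnn : ∀ i ∈ (univ : Finset (Fin m)),
          0 ≤ (v i - sh i - q) * (v i - sh i - q - 1) := fun i _ => aux_quad_nonneg _
      have h0 : ∑ i, (v i - sh i - q) * (v i - sh i - q - 1) = 0 := by linarith
      intro i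
      have hi := (Finset.sum_eq_zero_iff_of_nonneg hnn).mp h0 i (Finset.mem_univ i)
      rcases (aux_quad_zero _).mp hi with h' | h'
      · left; linarith
      · right; linarith
    · intro h
      have h0 : ∑ i, (v i - sh i - q) * (v i - sh i - q - 1) = 0 :=
        Finset.sum_eq_zero fun i _ => (aux_quad_zero _).mpr (by
          rcases h i with h' | h'
          · left; linarith
          · right; linarith)
      rw [h0, add_zero]
  have mLower : ∀ v : Fin m → ℤ, (∑ i, v i) = (d' 0 : ℤ) →
      (m : ℤ) * q ^ 2 + (2 * q + 1) * r ≤ ∑ i, (sh i - v i) ^ 2 := by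
    intro v hv
    rw [mIdent v hv]
    have h0 : 0 ≤ ∑ i, (v i - sh i - q) * (v i - sh i - q - 1) :=
      Finset.sum_nonneg fun i _ => aux_quad_nonneg _
    linarith
  -- the witness on the m-side
  set v0 : Fin m → ℤ := fun i => sh i + q + (if (i : ℕ) < r.toNat then 1 else 0)
    with hv0_def
  have hv0cond : ∀ i, v0 i - sh i = q ∨ v0 i - sh i = q + 1 := by
    intro i
    simp only [hv0_def]
    by_cases h : (i : ℕ) < r.toNat
    · right; rw [if_pos h]; ring
    · left; rw [if_neg h]; ring
  have hchi : ∑ i : Fin m, (if (i : ℕ) < r.toNat then (1 : ℤ) else 0) = r := by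
    have hrtm : r.toNat ≤ m := by omega
    rw [Fin.sum_univ_eq_sum_range (fun i => if i < r.toNat then (1 : ℤ) else 0) m,
      Finset.sum_boole]
    have hf : (range m).filter (fun i => i < r.toNat) = range r.toNat := by
      ext x; simp; omega
    rw [hf, Finset.card_range]
    exact Int.toNat_of_nonneg hr0
  have hv0sum : ∑ i, v0 i = (d' 0 : ℤ) := by
    simp only [hv0_def]
    rw [Finset.sum_add_distrib, Finset.sum_add_distrib, hsh, hchi, Finset.sum_const,
      Finset.card_univ, Fintype.card_fin, nsmul_eq_mul]
    linarith [htqr]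
  have hv0val : ∑ i, (sh i - v0 i) ^ 2 = (m : ℤ) * q ^ 2 + (2 * q + 1) * r :=
    (mEqchar v0 hv0sum).mpr hv0cond
  have hM0 : 0 ≤ (m : ℤ) * q ^ 2 + (2 * q + 1) * r := by
    have h1 : (0 : ℤ) ≤ (m : ℤ) * q ^ 2 := mul_nonneg hm0.le (sq_nonneg q)
    have h2 : (0 : ℤ) ≤ (2 * q + 1) * r := mul_nonneg (by linarith) hr0
    linarith
  -- value of Dhat
  have hDhatZ : (Dhat : ℤ) = (m : ℤ) * q ^ 2 + (2 * q + 1) * r := by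
    have hmem : ((m : ℤ) * q ^ 2 + (2 * q + 1) * r).toNat ∈ {n : ℕ | ∃ v : Fin m → ℤ,
        (∑ i, v i) = (d' 0 : ℤ) ∧ (∑ i, (sh i - v i) ^ 2) = (n : ℤ)} := by
      refine ⟨v0, hv0sum, ?_⟩
      rw [hv0val, Int.toNat_of_nonneg hM0]
    have hlb : ∀ n ∈ {n : ℕ | ∃ v : Fin m → ℤ,
        (∑ i, v i) = (d' 0 : ℤ) ∧ (∑ i, (sh i - v i) ^ 2) = (n : ℤ)},
        ((m : ℤ) * q ^ 2 + (2 * q + 1) * r).toNat ≤ n := by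
      rintro n ⟨v, hv1, hv2⟩
      have h := mLower v hv1
      rw [hv2] at h
      omega
    have heq : Dhat = ((m : ℤ) * q ^ 2 + (2 * q + 1) * r).toNat :=
      le_antisymm (Nat.sInf_le hmem) (hlb _ (Nat.sInf_mem ⟨_, hmem⟩))
    rw [heq, Int.toNat_of_nonneg hM0]
  clear_value Dhat
  -- the N-side
  have hesZ : ∀ e, e ∈ QipSet N d' → ∑ i ∈ Icc 1 N, (e i : ℤ) = (d' 0 : ℤ) := by
    intro e he
    exact_mod_cast congrArg (Nat.cast : ℕ → ℤ) he.2
  have hG : ∀ e ∈ QipSet N d', 2 * (Gqip N d' e : ℤ)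
      = ((m : ℤ) * q ^ 2 + (2 * q + 1) * r) + (d' 0 : ℤ) ^ 2
        - ∑ i ∈ Icc 1 m, ((d' i : ℤ) - d' 0) ^ 2 + Del N m d' q e := by
    intro e he
    rw [gqip_formula N d' mono e, hesZ e he, Finset.sum_sub_distrib,
      NIdentL N m hmN d' q r t ht htqr e (hesZ e he)]
    ring
  have hfacpos : ∀ e : ℕ → ℕ, ∀ i ∈ Ioc m N,
      (0 : ℤ) < (e i : ℤ) + 2 * ((d' i : ℤ) - d' 0) - (2 * q + 1) := by
    intro e i hi
    obtain ⟨him, hiN⟩ := Finset.mem_Ioc.mp hi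
    have h1 := hqlt i him hiN
    have h2 : (0 : ℤ) ≤ (e i : ℤ) := Int.natCast_nonneg _
    linarith
  have hDelnn : ∀ e ∈ QipSet N d', 0 ≤ Del N m d' q e := by
    intro e he
    unfold Del
    have h1 : 0 ≤ ∑ i ∈ Icc 1 m,
        ((e i : ℤ) + d' i - d' 0 - q) * ((e i : ℤ) + d' i - d' 0 - q - 1) :=
      Finset.sum_nonneg fun i _ => aux_quad_nonneg _
    have h2 : 0 ≤ ∑ i ∈ Ioc m N,
        (e i : ℤ) * ((e i : ℤ) + 2 * ((d' i : ℤ) - d' 0) - (2 * q + 1)) :=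
      Finset.sum_nonneg fun i hi =>
        mul_nonneg (Int.natCast_nonneg _) (hfacpos e i hi).le
    linarith
  have hDelchar : ∀ e ∈ QipSet N d', (Del N m d' q e = 0 ↔
      ((∀ i ∈ Icc 1 m, (e i : ℤ) + d' i - d' 0 = q ∨ (e i : ℤ) + d' i - d' 0 = q + 1)
        ∧ ∀ i ∈ Ioc m N, e i = 0)) := by
    intro e he
    unfold Del
    have h1nn : ∀ i ∈ Icc 1 m,
        (0:ℤ) ≤ ((e i : ℤ) + d' i - d' 0 - q) * ((e i : ℤ) + d' i - d' 0 - q - 1) :=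
      fun i _ => aux_quad_nonneg _
    have h2nn : ∀ i ∈ Ioc m N,
        (0:ℤ) ≤ (e i : ℤ) * ((e i : ℤ) + 2 * ((d' i : ℤ) - d' 0) - (2 * q + 1)) :=
      fun i hi => mul_nonneg (Int.natCast_nonneg _) (hfacpos e i hi).le
    constructor
    · intro h
      have a1 : 0 ≤ ∑ i ∈ Icc 1 m,
          ((e i : ℤ) + d' i - d' 0 - q) * ((e i : ℤ) + d' i - d' 0 - q - 1) :=
        Finset.sum_nonneg h1nn
      have a2 : 0 ≤ ∑ i ∈ Ioc m N,
          (e i : ℤ) * ((e i : ℤ) + 2 * ((d' i : ℤ) - d' 0) - (2 * q + 1)) :=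
        Finset.sum_nonneg h2nn
      have hs1 : ∑ i ∈ Icc 1 m,
          ((e i : ℤ) + d' i - d' 0 - q) * ((e i : ℤ) + d' i - d' 0 - q - 1) = 0 := by
        linarith
      have hs2 : ∑ i ∈ Ioc m N,
          (e i : ℤ) * ((e i : ℤ) + 2 * ((d' i : ℤ) - d' 0) - (2 * q + 1)) = 0 := by
        linarith
      constructor
      · intro i hi
        have hz := (Finset.sum_eq_zero_iff_of_nonneg h1nn).mp hs1 i hi
        rcases (aux_quad_zero _).mp hz with h' | h'
        · left; linarith
        · right; linarith
      · intro i hi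
        have hz := (Finset.sum_eq_zero_iff_of_nonneg h2nn).mp hs2 i hi
        rcases mul_eq_zero.mp hz with h' | h'
        · exact_mod_cast h'
        · exact absurd h' (hfacpos e i hi).ne'
    · rintro ⟨hA, hB⟩
      have hs1 : ∑ i ∈ Icc 1 m,
          ((e i : ℤ) + d' i - d' 0 - q) * ((e i : ℤ) + d' i - d' 0 - q - 1) = 0 :=
        Finset.sum_eq_zero fun i hi => (aux_quad_zero _).mpr (by
          rcases hA i hi with h' | h'
          · left; linarith
          · right; linarith)
      have hs2 : ∑ i ∈ Ioc m N,
          (e i : ℤ) * ((e i : ℤ) + 2 * ((d' i : ℤ) - d' 0) - (2 * q + 1)) = 0 :=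
        Finset.sum_eq_zero fun i hi => by rw [hB i hi]; simp
      rw [hs1, hs2, add_zero]
  -- nonnegativity of minimizing vectors
  have hvnn : ∀ v : Fin m → ℤ, (∀ i, v i - sh i = q ∨ v i - sh i = q + 1) →
      ∀ i, 0 ≤ v i := by
    intro v hc i
    have hdm : (d' ((i : ℕ) + 1) : ℤ) ≤ (d' m : ℤ) := by
      exact_mod_cast mono ((i : ℕ) + 1) m (by have := i.isLt; omega) hmN
    have hs : sh i = (d' 0 : ℤ) - d' ((i : ℕ) + 1) := by rw [hsh_def]
    rcases hc i with h | h <;> linarith [hqge]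
  have hPhimem : ∀ v : Fin m → ℤ, (∑ i, v i) = (d' 0 : ℤ) →
      (∀ i, v i - sh i = q ∨ v i - sh i = q + 1) → PhiMap m v ∈ QipSet N d' := by
    intro v hvs hvc
    constructor
    · intro i hi
      exact PhiMap_zero m v i (by omega)
    · have hZ := PhiMap_sum N m hmN v (hvnn v hvc)
      rw [hvs] at hZ
      exact_mod_cast hZ
  have hPhiPe : ∀ v : Fin m → ℤ, (∀ i, v i - sh i = q ∨ v i - sh i = q + 1) →
      ((∀ i ∈ Icc 1 m, (PhiMap m v i : ℤ) + d' i - d' 0 = q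
          ∨ (PhiMap m v i : ℤ) + d' i - d' 0 = q + 1)
        ∧ ∀ i ∈ Ioc m N, PhiMap m v i = 0) := by
    intro v hvc
    constructor
    · intro i hi
      obtain ⟨h1, h2⟩ := Finset.mem_Icc.mp hi
      have h2' : i - 1 < m := by omega
      rw [PhiMap_eval m v i h1 h2']
      rw [Int.toNat_of_nonneg (hvnn v hvc ⟨i - 1, h2'⟩)]
      have hc := hvc ⟨i - 1, h2'⟩
      have hs : sh ⟨i - 1, h2'⟩ = (d' 0 : ℤ) - d' i := by
        have hi1 : i - 1 + 1 = i := by omega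
        rw [hsh_def]
        show (d' 0 : ℤ) - d' (i - 1 + 1) = (d' 0 : ℤ) - d' i
        rw [hi1]
      rcases hc with h | h
      · left; linarith
      · right; linarith
    · intro i hi
      obtain ⟨h1, h2⟩ := Finset.mem_Ioc.mp hi
      exact PhiMap_zero m v i (by omega)
  -- the QIP minimum
  have he0Q : PhiMap m v0 ∈ QipSet N d' := hPhimem v0 hv0sum hv0cond
  have he0Del : Del N m d' q (PhiMap m v0) = 0 :=
    (hDelchar _ he0Q).mpr (hPhiPe v0 hv0cond)
  have hmemQ : Gqip N d' (PhiMap m v0)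
      ∈ {n : ℕ | ∃ e ∈ QipSet N d', Gqip N d' e = n} := ⟨_, he0Q, rfl⟩
  have hlbQ : ∀ n ∈ {n : ℕ | ∃ e ∈ QipSet N d', Gqip N d' e = n},
      Gqip N d' (PhiMap m v0) ≤ n := by
    rintro n ⟨e, heQ, rfl⟩
    have h1 := hG e heQ
    have h2 := hG _ he0Q
    have h3 := hDelnn e heQ
    rw [he0Del, add_zero] at h2
    have h4 : (Gqip N d' (PhiMap m v0) : ℤ) ≤ (Gqip N d' e : ℤ) := by linarith
    exact_mod_cast h4
  have hQmin : QipMin N d' = Gqip N d' (PhiMap m v0) :=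
    le_antisymm (Nat.sInf_le hmemQ) (hlbQ _ (Nat.sInf_mem ⟨_, hmemQ⟩))
  constructor
  · -- the value identity
    have h2 := hG _ he0Q
    rw [he0Del, add_zero] at h2
    rw [hQmin, h2, hDhatZ]
    try ring
  · -- the count of minimizers
    have hSe : {e ∈ QipSet N d' | Gqip N d' e = QipMin N d'}
        = PhiMap m '' {v : Fin m → ℤ | (∑ i, v i) = (d' 0 : ℤ)
            ∧ ∀ i, v i - sh i = q ∨ v i - sh i = q + 1} := by
      ext e
      simp only [Set.mem_setOf_eq, Set.mem_image, Set.mem_sep_iff]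
      constructor
      · rintro ⟨heQ, heMin⟩
        have h1 := hG e heQ
        have h2 := hG _ he0Q
        rw [he0Del, add_zero] at h2
        have hGe : (Gqip N d' e : ℤ) = (Gqip N d' (PhiMap m v0) : ℤ) := by
          exact_mod_cast congrArg (Nat.cast : ℕ → ℤ) (heMin.trans hQmin)
        have hDel0 : Del N m d' q e = 0 := by linarith
        obtain ⟨hA, hB⟩ := (hDelchar e heQ).mp hDel0
        refine ⟨fun i => (e ((i : ℕ) + 1) : ℤ), ⟨?_, ?_⟩, ?_⟩
        · have hs := hesZ e heQ
          rw [aux_split N m hmN] at hs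
          have hz : ∑ i ∈ Ioc m N, (e i : ℤ) = 0 :=
            Finset.sum_eq_zero fun i hi => by rw [hB i hi]; rfl
          rw [hz, add_zero, aux_sum_Icc_one m (fun i => (e i : ℤ)),
            ← Fin.sum_univ_eq_sum_range (fun i => (e (i + 1) : ℤ)) m] at hs
          exact hs
        · intro i
          have hi1 : (i : ℕ) + 1 ∈ Icc 1 m :=
            Finset.mem_Icc.mpr ⟨by omega, by have := i.isLt; omega⟩
          have hAi := hA _ hi1
          have hs : sh i = (d' 0 : ℤ) - d' ((i : ℕ) + 1) := by rw [hsh_def]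
          rcases hAi with h | h
          · left; linarith
          · right; linarith
        · funext i
          by_cases hcase : 1 ≤ i ∧ i - 1 < m
          · rw [PhiMap_eval m _ i hcase.1 hcase.2]
            show ((e (i - 1 + 1) : ℤ)).toNat = e i
            rw [show i - 1 + 1 = i from by omega, Int.toNat_natCast]
          · rw [PhiMap_zero m _ i hcase]
            by_cases hiN : 1 ≤ i ∧ i ≤ N
            · exact (hB i (Finset.mem_Ioc.mpr ⟨by omega, hiN.2⟩)).symm
            · exact (heQ.1 i hiN).symm
      · rintro ⟨v, ⟨hvs, hvc⟩, rfl⟩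
        have hQ := hPhimem v hvs hvc
        refine ⟨hQ, ?_⟩
        have hD : Del N m d' q (PhiMap m v) = 0 := (hDelchar _ hQ).mpr (hPhiPe v hvc)
        have h1 := hG _ hQ
        have h2 := hG _ he0Q
        rw [hD, add_zero] at h1
        rw [he0Del, add_zero] at h2
        have h4 : (Gqip N d' (PhiMap m v) : ℤ) = (Gqip N d' (PhiMap m v0) : ℤ) := by
          linarith
        rw [hQmin]
        exact_mod_cast h4
    have hSv : {v : Fin m → ℤ | (∑ i, v i) = (d' 0 : ℤ)
          ∧ (∑ i, (sh i - v i) ^ 2) = (Dhat : ℤ)}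
        = {v : Fin m → ℤ | (∑ i, v i) = (d' 0 : ℤ)
            ∧ ∀ i, v i - sh i = q ∨ v i - sh i = q + 1} := by
      ext v
      simp only [Set.mem_setOf_eq]
      constructor
      · rintro ⟨h1, h2⟩
        rw [hDhatZ] at h2
        exact ⟨h1, (mEqchar v h1).mp h2⟩
      · rintro ⟨h1, h2⟩
        refine ⟨h1, ?_⟩
        rw [hDhatZ]
        exact (mEqchar v h1).mpr h2
    rw [hSe, hSv]
    apply Set.ncard_image_of_injOn
    rintro v1 hv1 v2 hv2 heq
    funext i
    have h1 := PhiMap_succ m v1 i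
    have h2 := PhiMap_succ m v2 i
    have h3 : (v1 i).toNat = (v2 i).toNat := by rw [← h1, ← h2, heq]
    have n1 := hvnn v1 hv1.2 i
    have n2 := hvnn v2 hv2.2 i
    omega
end

section
/- Let m ≥ 1 and let 0 ≤ d'_0 ≤ d'_1 ≤ … ≤ d'_m be integers. Set S = Σ_{j=0}^m d'_j and let ŝ ∈ ℤ^m be the vector with ŝ_i = d'_0 − d'_i for 1 ≤ i ≤ m. Then min{ ‖ŝ − v‖² : v ∈ ℤ^m, Σ_{i=1}^m v_i = d'_0 } = m·{S/m}·(1 − {S/m}) + S²/m + m·(d'_0)² − 2·d'_0·S, where {x} denotes the fractional part of x. Moreover, the number of v ∈ ℤ^m with Σ v_i = d'_0 attaining this minimum equals the binomial coefficient C(m, |S − m·⌊S/m + 1/2⌋|). -/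
/-!
Substituting `w = ŝ - v` turns the problem into minimising `∑ wᵢ²` over integer vectors with
prescribed sum `T = m d'₀ - S`. Write `T = m q + r` with `0 ≤ r < m` and `x = w - q`; then
`∑ wᵢ² = m q² + (2q + 1) r + ∑ (xᵢ² - xᵢ)`, and `x² ≥ x` on `ℤ` with equality exactly for
`x ∈ {0, 1}`. So the minimisers are the vectors equal to `q + 1` on an `r`-subset and to `q`
elsewhere, which gives `C(m, r)` of them. Finally `r ≡ -S (mod m)`, so with `ρ = S mod m` we have
`r (m - r) = ρ (m - ρ)` and `C(m, r) = C(m, ρ)`, while `|S - m round(S/m)| = min(ρ, m - ρ)`.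
-/

open Finset

/-- `(n - r) q² + r (q + 1)²` for `T = n q + r`: the value of `∑ wᵢ²` when `r` of the `n` entries
are `q + 1` and the others `q`. -/
def balancedSqSum (n T : ℤ) : ℤ := n * (T / n) ^ 2 + (2 * (T / n) + 1) * (T % n)

theorem mul_balancedSqSum (n T : ℤ) :
    n * balancedSqSum n T = T ^ 2 + T % n * (n - T % n) := by
  have h := Int.mul_ediv_add_emod T n
  unfold balancedSqSum
  linear_combination (n * (T / n) + T % n + T) * h

section SumSq

variable {ι : Type*}

def balancedVec [DecidableEq ι] (q : ℤ) (A : Finset ι) (i : ι) : ℤ :=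
  q + if i ∈ A then 1 else 0

theorem balancedVec_injective [DecidableEq ι] (q : ℤ) :
    Function.Injective (balancedVec (ι := ι) q) := by
  intro A B h
  ext i
  have hi := congrFun h i
  by_cases hA : i ∈ A <;> by_cases hB : i ∈ B <;> simp_all [balancedVec]

variable [Fintype ι]

theorem Int.sum_le_sum_sq (x : ι → ℤ) : ∑ i, x i ≤ ∑ i, x i ^ 2 :=
  sum_le_sum fun i _ => Int.le_self_sq (x i)

theorem Int.sum_sq_eq_sum_iff (x : ι → ℤ) :
    ∑ i, x i ^ 2 = ∑ i, x i ↔ ∀ i, x i = 0 ∨ x i = 1 := by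
  have hsq (i : ι) : x i ^ 2 - x i = 0 ↔ x i = 0 ∨ x i = 1 := by
    rw [show x i ^ 2 - x i = x i * (x i - 1) by ring, mul_eq_zero, sub_eq_zero]
  rw [← sub_eq_zero, ← sum_sub_distrib,
    sum_eq_zero_iff_of_nonneg fun i _ => sub_nonneg.2 (Int.le_self_sq (x i))]
  simp only [mem_univ, true_implies, hsq]

theorem sum_sq_eq_balancedSqSum_add {w : ι → ℤ} {T : ℤ} (hw : ∑ i, w i = T) :
    ∑ i, w i ^ 2 = balancedSqSum (Fintype.card ι) T +
      (∑ i, (w i - T / Fintype.card ι) ^ 2 - ∑ i, (w i - T / Fintype.card ι)) := by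
  set n : ℤ := (Fintype.card ι : ℤ)
  have hx : ∑ i, (w i - T / n) = T % n := by
    rw [sum_sub_distrib, hw, sum_const, card_univ, nsmul_eq_mul, Int.emod_def]
  have hexp : ∑ i, w i ^ 2 = n * (T / n) ^ 2 + 2 * (T / n) * ∑ i, (w i - T / n) +
      ∑ i, (w i - T / n) ^ 2 := by
    have hterm (i : ι) :
        w i ^ 2 = (T / n) ^ 2 + 2 * (T / n) * (w i - T / n) + (w i - T / n) ^ 2 := by
      ring
    rw [sum_congr rfl fun i _ => hterm i, sum_add_distrib, sum_add_distrib, ← mul_sum, sum_const,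
      card_univ, nsmul_eq_mul]
  rw [hexp, hx, balancedSqSum]
  ring

theorem balancedSqSum_le_sum_sq {w : ι → ℤ} {T : ℤ} (hw : ∑ i, w i = T) :
    balancedSqSum (Fintype.card ι) T ≤ ∑ i, w i ^ 2 := by
  rw [sum_sq_eq_balancedSqSum_add hw, le_add_iff_nonneg_right, sub_nonneg]
  exact Int.sum_le_sum_sq _

section DecidableEq

variable [DecidableEq ι]

theorem sum_balancedVec (q : ℤ) (A : Finset ι) :
    ∑ i, balancedVec q A i = Fintype.card ι * q + #A := by
  simp [balancedVec, sum_add_distrib]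

theorem sum_sq_eq_balancedSqSum_iff {w : ι → ℤ} {T : ℤ} (hw : ∑ i, w i = T) :
    ∑ i, w i ^ 2 = balancedSqSum (Fintype.card ι) T ↔
      ∃ A : Finset ι, w = balancedVec (T / Fintype.card ι) A := by
  rw [sum_sq_eq_balancedSqSum_add hw, add_eq_left, sub_eq_zero, Int.sum_sq_eq_sum_iff]
  set q := T / (Fintype.card ι : ℤ)
  constructor
  · intro h01
    refine ⟨univ.filter fun i => w i - q = 1, funext fun i => ?_⟩
    rcases h01 i with h | h <;> simp [balancedVec, h] <;> omega
  · rintro ⟨A, rfl⟩ i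
    by_cases hi : i ∈ A <;> simp [balancedVec, hi]

theorem setOf_sum_sq_eq_balancedSqSum (T : ℤ) :
    {w : ι → ℤ | ∑ i, w i = T ∧ ∑ i, w i ^ 2 = balancedSqSum (Fintype.card ι) T} =
      balancedVec (T / Fintype.card ι) '' {A | (#A : ℤ) = T % Fintype.card ι} := by
  have hT := Int.mul_ediv_add_emod T (Fintype.card ι)
  ext w
  constructor
  · rintro ⟨hw, hsq⟩
    obtain ⟨A, rfl⟩ := (sum_sq_eq_balancedSqSum_iff hw).1 hsq
    rw [sum_balancedVec] at hw
    exact ⟨A, by simp only [Set.mem_ofPred_eq]; linarith, rfl⟩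
  · rintro ⟨A, hA, rfl⟩
    have hw : ∑ i, balancedVec (T / Fintype.card ι) A i = T := by
      rw [sum_balancedVec, hA, hT]
    exact ⟨hw, (sum_sq_eq_balancedSqSum_iff hw).2 ⟨A, rfl⟩⟩

end DecidableEq

theorem sum_sub_eq_sum_sub_iff (s v : ι → ℤ) (c : ℤ) :
    ∑ i, (s i - v i) = ∑ i, s i - c ↔ ∑ i, v i = c := by
  rw [sum_sub_distrib, sub_right_inj]

variable [Nonempty ι]

theorem ncard_setOf_sum_sq_eq_balancedSqSum (T : ℤ) :
    {w : ι → ℤ | ∑ i, w i = T ∧ ∑ i, w i ^ 2 = balancedSqSum (Fintype.card ι) T}.ncard =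
      (Fintype.card ι).choose (T % Fintype.card ι).toNat := by
  classical
  have hr : 0 ≤ T % Fintype.card ι := Int.emod_nonneg _ (by exact_mod_cast Fintype.card_ne_zero)
  have hA : {A : Finset ι | (#A : ℤ) = T % Fintype.card ι} =
      ↑(powersetCard (T % Fintype.card ι).toNat (univ : Finset ι)) := by
    ext A
    simp only [Set.mem_ofPred_eq, mem_coe, mem_powersetCard, subset_univ, true_and]
    omega
  rw [setOf_sum_sq_eq_balancedSqSum, Set.ncard_image_of_injective _ (balancedVec_injective _), hA,
    Set.ncard_coe_finset, card_powersetCard, card_univ]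

theorem exists_sum_eq_sum_sq_eq_balancedSqSum (T : ℤ) :
    ∃ w : ι → ℤ, ∑ i, w i = T ∧ ∑ i, w i ^ 2 = balancedSqSum (Fintype.card ι) T := by
  classical
  have hn : (0 : ℤ) < Fintype.card ι := by exact_mod_cast Fintype.card_pos
  have hr := Int.emod_nonneg T hn.ne'
  have hrn := Int.emod_lt_of_pos T hn
  obtain ⟨A, -, hA⟩ := exists_subset_card_eq (s := (univ : Finset ι))
    (n := (T % Fintype.card ι).toNat) (by rw [card_univ]; omega)
  have hmem : balancedVec (T / Fintype.card ι) A ∈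
      {w : ι → ℤ | ∑ i, w i = T ∧ ∑ i, w i ^ 2 = balancedSqSum (Fintype.card ι) T} := by
    rw [setOf_sum_sq_eq_balancedSqSum]
    exact ⟨A, by simp only [Set.mem_ofPred_eq]; omega, rfl⟩
  exact ⟨_, hmem⟩

theorem sInf_sum_sub_sq (s : ι → ℤ) (c : ℤ) :
    ((sInf {n : ℕ | ∃ v : ι → ℤ, ∑ i, v i = c ∧ ∑ i, (s i - v i) ^ 2 = n} : ℕ) : ℤ) =
      balancedSqSum (Fintype.card ι) (∑ i, s i - c) := by
  obtain ⟨w, hw, hsq⟩ := exists_sum_eq_sum_sq_eq_balancedSqSum (ι := ι) (∑ i, s i - c)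
  have hK : 0 ≤ balancedSqSum (Fintype.card ι) (∑ i, s i - c) :=
    hsq ▸ sum_nonneg fun i _ => sq_nonneg (w i)
  have hleast : IsLeast {n : ℕ | ∃ v : ι → ℤ, ∑ i, v i = c ∧ ∑ i, (s i - v i) ^ 2 = n}
      (balancedSqSum (Fintype.card ι) (∑ i, s i - c)).toNat := by
    refine ⟨⟨s - w, ?_, ?_⟩, ?_⟩
    · rw [← sum_sub_eq_sum_sub_iff s]
      simpa using hw
    · simpa [hK] using hsq
    · rintro n ⟨v, hv, hn⟩
      have := balancedSqSum_le_sum_sq ((sum_sub_eq_sum_sub_iff s v c).2 hv)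
      omega
  rw [hleast.csInf_eq, Int.toNat_of_nonneg hK]

theorem ncard_setOf_sum_sub_sq (s : ι → ℤ) (c : ℤ) :
    {v : ι → ℤ | ∑ i, v i = c ∧
        ∑ i, (s i - v i) ^ 2 = balancedSqSum (Fintype.card ι) (∑ i, s i - c)}.ncard =
      (Fintype.card ι).choose ((∑ i, s i - c) % Fintype.card ι).toNat := by
  rw [← ncard_setOf_sum_sq_eq_balancedSqSum]
  convert Set.ncard_preimage_of_injective_subset_range (Equiv.subLeft s).injective
    ((Set.subset_univ _).trans (Equiv.subLeft s).surjective.range_eq.symm.subset) using 2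
  ext v
  simp only [Set.mem_preimage, Equiv.subLeft_apply, Set.mem_ofPred_eq, Pi.sub_apply,
    sum_sub_eq_sum_sub_iff]

end SumSq

theorem Int.neg_emod_natCast_eq (a : ℤ) (n : ℕ) :
    (-a % n = 0 ∧ a % n = 0) ∨ -a % n = n - a % n := by
  rw [Int.neg_emod]
  split_ifs with h
  · exact Or.inl ⟨rfl, Int.emod_eq_zero_of_dvd h⟩
  · exact Or.inr (by simp)

theorem Int.neg_emod_mul_sub_neg_emod (a : ℤ) (n : ℕ) :
    -a % n * (n - -a % n) = a % n * (n - a % n) := by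
  rcases Int.neg_emod_natCast_eq a n with ⟨h, h'⟩ | h
  · rw [h, h']
  · rw [h]; ring

theorem natAbs_sub_mul_round_div {n : ℕ} (hn : 0 < n) (a : ℤ) :
    ((a - n * round ((a : ℝ) / n)).natAbs : ℤ) = min (a % n) (n - a % n) := by
  have hn' : (0 : ℝ) < n := by exact_mod_cast hn
  have h : |((a - n * round ((a : ℝ) / n) : ℤ) : ℝ)| =
      min ((a % n : ℤ) : ℝ) (n - (a % n : ℤ)) := by
    calc |((a - n * round ((a : ℝ) / n) : ℤ) : ℝ)|
        = n * |(a : ℝ) / n - round ((a : ℝ) / n)| := by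
          push_cast
          rw [← abs_of_pos hn', ← abs_mul, abs_of_pos hn']
          congr 1
          field_simp
      _ = min ((a % n : ℤ) : ℝ) (n - (a % n : ℤ)) := by
          rw [abs_sub_round_eq_min, Int.fract_div_intCast_eq_div_intCast_mod,
            mul_min_of_nonneg _ _ hn'.le]
          congr 1 <;> field_simp
  rw [Int.natCast_natAbs]
  exact_mod_cast h

theorem choose_toNat_mul_sub_emod {n : ℕ} (hn : 0 < n) (c S : ℤ) :
    n.choose ((n * c - S) % n).toNat = n.choose (S - n * ⌊(S : ℝ) / n + 1 / 2⌋).natAbs := by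
  have hr := Int.emod_nonneg S (by omega : (n : ℤ) ≠ 0)
  have hrn := Int.emod_lt_of_pos S (by omega : (0 : ℤ) < n)
  have hT : (n * c - S) % n = -S % n := by
    rw [sub_eq_neg_add, Int.add_mul_emod_self_left]
  have hround := natAbs_sub_mul_round_div hn S
  rw [round_eq] at hround
  have hlhs : ((n * c - S) % n).toNat = (S % n).toNat ∨
      ((n * c - S) % n).toNat = n - (S % n).toNat := by
    rw [hT]
    rcases Int.neg_emod_natCast_eq S n with ⟨h, h'⟩ | h <;> omega
  have hrhs : (S - n * ⌊(S : ℝ) / n + 1 / 2⌋).natAbs = (S % n).toNat ∨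
      (S - n * ⌊(S : ℝ) / n + 1 / 2⌋).natAbs = n - (S % n).toNat := by
    omega
  have hsymm : n.choose (n - (S % n).toNat) = n.choose (S % n).toNat := Nat.choose_symm (by omega)
  rcases hlhs with h | h <;> rcases hrhs with h' | h' <;> rw [h, h'] <;> simp only [hsymm]

theorem balancedSqSum_mul_sub_eq {n : ℕ} (hn : 0 < n) (c S : ℤ) :
    (balancedSqSum n (n * c - S) : ℝ) =
      n * Int.fract ((S : ℝ) / n) * (1 - Int.fract ((S : ℝ) / n)) + (S : ℝ) ^ 2 / n +
        n * (c : ℝ) ^ 2 - 2 * c * S := by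
  have hT : (n * c - S) % n = -S % n := by
    rw [sub_eq_neg_add, Int.add_mul_emod_self_left]
  have key := mul_balancedSqSum n (n * c - S)
  rw [hT, Int.neg_emod_mul_sub_neg_emod] at key
  have hn' : (n : ℝ) ≠ 0 := by positivity
  rw [Int.fract_div_intCast_eq_div_intCast_mod]
  field_simp
  have := congrArg (Int.cast : ℤ → ℝ) key
  push_cast at this
  linear_combination this

theorem stmt11_general (m : ℕ) (hm : 1 ≤ m) (d' : ℕ → ℕ) :
    let S : ℤ := ∑ j ∈ Finset.range (m + 1), (d' j : ℤ)
    let sh : Fin m → ℤ := fun i => (d' 0 : ℤ) - (d' ((i : ℕ) + 1) : ℤ)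
    let Dhat : ℕ := sInf {n : ℕ | ∃ v : Fin m → ℤ,
      (∑ i, v i) = (d' 0 : ℤ) ∧ (∑ i, (sh i - v i) ^ 2) = (n : ℤ)}
    (Dhat : ℝ) = m * Int.fract ((S : ℝ) / m) * (1 - Int.fract ((S : ℝ) / m)) +
          (S : ℝ) ^ 2 / m + m * (d' 0 : ℝ) ^ 2 - 2 * (d' 0 : ℝ) * (S : ℝ) ∧
      {v : Fin m → ℤ |
          (∑ i, v i) = (d' 0 : ℤ) ∧ (∑ i, (sh i - v i) ^ 2) = (Dhat : ℤ)}.ncard =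
        m.choose (S - (m : ℤ) * ⌊(S : ℝ) / m + 1 / 2⌋).natAbs := by
  intro S sh Dhat
  have : Nonempty (Fin m) := ⟨⟨0, hm⟩⟩
  have hT : ∑ i, sh i - d' 0 = m * d' 0 - S := by
    simp only [sh, S, sum_sub_distrib, sum_const, card_univ, Fintype.card_fin, nsmul_eq_mul,
      Fin.sum_univ_eq_sum_range (fun j => (d' (j + 1) : ℤ)), sum_range_succ']
    ring
  have hD : (Dhat : ℤ) = balancedSqSum m (m * d' 0 - S) := by
    simpa only [Fintype.card_fin, hT] using sInf_sum_sub_sq sh (d' 0)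
  refine ⟨?_, ?_⟩
  · have hDR : (Dhat : ℝ) = balancedSqSum m (m * d' 0 - S) := by exact_mod_cast hD
    rw [hDR, balancedSqSum_mul_sub_eq hm]
    push_cast
    ring
  · rw [hD, ← choose_toNat_mul_sub_emod hm (d' 0) S, ← hT]
    simpa only [Fintype.card_fin] using ncard_setOf_sum_sub_sq sh (d' 0)

/-- Closest-vector problem for the type-A lattice: for `0 ≤ d'_0 ≤ … ≤ d'_m`,
`S = Σ_{j=0}^m d'_j` and `ŝ_i = d'_0 − d'_i`, the minimal squared Euclidean distance
from `ŝ` to an integer point of the hyperplane `Σ v_i = d'_0` is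
`m·{S/m}(1 − {S/m}) + S²/m + m(d'_0)² − 2d'_0·S`, and it is attained at exactly
`C(m, |S − m⌊S/m + 1/2⌋|)` such integer points. -/
theorem stmt11 (m : ℕ) (hm : 1 ≤ m) (d' : ℕ → ℕ)
    (hmono : ∀ i : ℕ, i < m → d' i ≤ d' (i + 1)) :
    let S : ℤ := ∑ j ∈ Finset.range (m + 1), (d' j : ℤ)
    let sh : Fin m → ℤ := fun i => (d' 0 : ℤ) - (d' ((i : ℕ) + 1) : ℤ)
    let Dhat : ℕ := sInf {n : ℕ | ∃ v : Fin m → ℤ,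
      (∑ i, v i) = (d' 0 : ℤ) ∧ (∑ i, (sh i - v i) ^ 2) = (n : ℤ)}
    (Dhat : ℝ) = m * Int.fract ((S : ℝ) / m) * (1 - Int.fract ((S : ℝ) / m)) +
          (S : ℝ) ^ 2 / m + m * (d' 0 : ℝ) ^ 2 - 2 * (d' 0 : ℝ) * (S : ℝ) ∧
      {v : Fin m → ℤ |
          (∑ i, v i) = (d' 0 : ℤ) ∧ (∑ i, (sh i - v i) ^ 2) = (Dhat : ℤ)}.ncard =
        m.choose (S - (m : ℤ) * ⌊(S : ℝ) / m + 1 / 2⌋).natAbs :=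
  stmt11_general m hm d'
end
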